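/- arXiv:2410.08376 — 6 statements merged into one kernel-verified Lean document; each statement's English description precedes it below -/
import Mathlib

section
/- Let G be a finite simple graph equipped with an acyclic orientation R, and let H be a finite simple graph. Then the number of graph homomorphisms from H to G equals the sum, over all acyclic orientations S of H, of the number of maps φ : V(H) → V(G) such that for all u, v ∈ V(H), S u v implies R (φ u) (φ v). -/
/-- `R` is an acyclic orientation of the simple graph `G`: every arc is an edge,
every edge gets exactly one direction, and there are no directed cycles. -/
def IsAcyclicOrientation {V : Type*} (G : SimpleGraph V) (R : V → V → Prop) : Prop :=
  (∀ u v, R u v → G.Adj u v) ∧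
  (∀ u v, G.Adj u v ↔ Xor' (R u v) (R v u)) ∧
  Irreflexive (Relation.TransGen R)

/-!
Every homomorphism `φ : H →g G` pulls `R` back to the acyclic orientation `u → v :⇔ H.Adj u v ∧
R (φ u) (φ v)` of `H`, and `φ` carries that orientation into `R`. Conversely, a map carrying some
acyclic orientation `S` of `H` into `R` is a homomorphism whose pullback is `S`, since both `S` and
the pullback orient each edge of `H` in exactly one direction. Hence homomorphisms are in bijection
with pairs `(S, φ)`, and counting them fibre by fibre gives the sum.
-/

section

variable {VH VG : Type*} {G : SimpleGraph VG} {H : SimpleGraph VH} {R : VG → VG → Prop}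

def pullbackOrientation (H : SimpleGraph VH) (R : VG → VG → Prop) (φ : VH → VG) :
    VH → VH → Prop :=
  fun u v => H.Adj u v ∧ R (φ u) (φ v)

namespace IsAcyclicOrientation

lemma pullbackOrientation (hR : IsAcyclicOrientation G R) (φ : H →g G) :
    IsAcyclicOrientation H (pullbackOrientation H R φ) := by
  obtain ⟨-, hR_xor, hR_acyclic⟩ := hR
  refine ⟨fun u v h => h.1, fun u v => ⟨fun hadj => ?_, ?_⟩, fun u hcycle => ?_⟩
  · rcases (hR_xor (φ u) (φ v)).mp (φ.map_adj hadj) with ⟨huv, hvu⟩ | ⟨hvu, huv⟩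
    · exact Or.inl ⟨⟨hadj, huv⟩, fun h => hvu h.2⟩
    · exact Or.inr ⟨⟨hadj.symm, hvu⟩, fun h => huv h.2⟩
  · rintro (⟨huv, -⟩ | ⟨hvu, -⟩)
    · exact huv.1
    · exact hvu.1.symm
  · exact hR_acyclic (φ u) (Relation.TransGen.lift φ (fun _ _ h => h.2) u u hcycle)

lemma map_adj_of_forall_rel (hR : IsAcyclicOrientation G R) {S : VH → VH → Prop}
    (hS : IsAcyclicOrientation H S) {φ : VH → VG} (hφ : ∀ u v, S u v → R (φ u) (φ v))
    {u v : VH} (hadj : H.Adj u v) : G.Adj (φ u) (φ v) := by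
  rcases (hS.2.1 u v).mp hadj with ⟨huv, -⟩ | ⟨hvu, -⟩
  · exact hR.1 _ _ (hφ _ _ huv)
  · exact (hR.1 _ _ (hφ _ _ hvu)).symm

lemma pullbackOrientation_eq_of_forall_rel (hR : IsAcyclicOrientation G R)
    {S : VH → VH → Prop} (hS : IsAcyclicOrientation H S) {φ : VH → VG}
    (hφ : ∀ u v, S u v → R (φ u) (φ v)) :
    _root_.pullbackOrientation H R φ = S := by
  ext u v
  refine ⟨fun ⟨hadj, hR_uv⟩ => ?_, fun huv => ⟨hS.1 _ _ huv, hφ _ _ huv⟩⟩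
  rcases (hS.2.1 u v).mp hadj with ⟨huv, -⟩ | ⟨hvu, -⟩
  · exact huv
  · have hR_vu := hφ _ _ hvu
    rcases (hR.2.1 (φ u) (φ v)).mp (hR.map_adj_of_forall_rel hS hφ hadj) with ⟨-, h⟩ | ⟨-, h⟩
    exacts [(h hR_vu).elim, (h hR_uv).elim]

end IsAcyclicOrientation

noncomputable def homEquivSigmaAcyclicOrientation (hR : IsAcyclicOrientation G R) :
    (H →g G) ≃
      Σ S : {S : VH → VH → Prop // IsAcyclicOrientation H S},
        {φ : VH → VG // ∀ u v, S.1 u v → R (φ u) (φ v)} where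
  toFun φ := ⟨⟨pullbackOrientation H R φ, hR.pullbackOrientation φ⟩, ⟨φ, fun _ _ h => h.2⟩⟩
  invFun x := ⟨x.2.1, hR.map_adj_of_forall_rel x.1.2 x.2.2⟩
  left_inv _ := rfl
  right_inv := by
    rintro ⟨⟨S, hS⟩, ⟨φ, hφ⟩⟩
    obtain rfl := hR.pullbackOrientation_eq_of_forall_rel hS hφ
    rfl

end

/-- The number of graph homomorphisms from `H` to `G` equals the sum, over all
acyclic orientations `S` of `H`, of the number of maps `φ : V(H) → V(G)` that
carry every arc of `S` to an arc of the acyclic orientation `R` of `G`. -/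
theorem hom_count_eq_sum_over_acyclic_orientations
    {VH VG : Type*} [Fintype VH] [Fintype VG]
    (G : SimpleGraph VG) (H : SimpleGraph VH)
    (R : VG → VG → Prop) (hR : IsAcyclicOrientation G R) :
    Nat.card (H →g G) =
      ∑ᶠ S ∈ {S : VH → VH → Prop | IsAcyclicOrientation H S},
        Nat.card {φ : VH → VG // ∀ u v, S u v → R (φ u) (φ v)} := by
  classical
  rw [← finsum_set_coe_eq_finsum_mem, finsum_eq_sum_of_fintype,
    Nat.card_congr (homEquivSigmaAcyclicOrientation hR), Nat.card_sigma]
  congr! -- the two sums differ only in the `Fintype` instance on the set of orientations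
end

section
/- Let V be a finite vertex set, A an irreflexive relation on V (a finite directed graph), and k ≥ 2 an integer. For u, v ∈ V let c(u,v) denote the number of vertices w ∈ V with A w u and A w v. Then the number of maps φ : ZMod (2k) → V satisfying, for every i ∈ ZMod (2k) with i odd, both A (φ i) (φ (i−1)) and A (φ i) (φ (i+1)), equals the sum over all maps g : ZMod k → V of the product over i ∈ ZMod k of c(g i, g (i+1)). (This identifies homomorphisms of the alternately oriented 2k-cycle, whose odd positions are sources, with weighted colorful k-cycles in the out-out wedge graph.) -/
set_option linter.unusedSectionVars false

section Aux

variable (k : ℕ) [NeZero k] [NeZero (2 * k)]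

private def fE (j : ZMod k) : ZMod (2 * k) := 2 * (j.val : ZMod (2 * k))

private def psiE (i : ZMod (2 * k)) : ZMod k := ((i.val / 2 : ℕ) : ZMod k)

variable {k}

private lemma val_fE (j : ZMod k) : (fE k j).val = 2 * j.val := by
  have hj := ZMod.val_lt j
  have h : fE k j = ((2 * j.val : ℕ) : ZMod (2 * k)) := by
    simp [fE]
  rw [h, ZMod.val_natCast, Nat.mod_eq_of_lt (by omega)]

private lemma val_fE_succ (j : ZMod k) : (fE k j + 1).val = 2 * j.val + 1 := by
  have hj := ZMod.val_lt j
  have h : fE k j + 1 = ((2 * j.val + 1 : ℕ) : ZMod (2 * k)) := by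
    simp [fE]
  rw [h, ZMod.val_natCast, Nat.mod_eq_of_lt (by omega)]

private lemma psiE_fE (j : ZMod k) : psiE k (fE k j) = j := by
  rw [psiE, val_fE, Nat.mul_div_cancel_left _ (by norm_num)]
  simp [ZMod.natCast_val, ZMod.cast_id]

private lemma psiE_fE_succ (j : ZMod k) : psiE k (fE k j + 1) = j := by
  rw [psiE, val_fE_succ]
  have : (2 * j.val + 1) / 2 = j.val := by omega
  rw [this]
  simp [ZMod.natCast_val, ZMod.cast_id]

private lemma two_mul_mod (a : ℕ) :
    ((2 * (a % k) : ℕ) : ZMod (2 * k)) = ((2 * a : ℕ) : ZMod (2 * k)) := by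
  have h : ((2 * k : ℕ) : ZMod (2 * k)) = 0 := ZMod.natCast_self _
  have h2 : ((k * (a / k) + a % k : ℕ) : ZMod (2 * k)) = ((a : ℕ) : ZMod (2 * k)) := by
    rw [Nat.div_add_mod]
  push_cast at h h2 ⊢
  linear_combination 2 * h2 - ((a / k : ℕ) : ZMod (2 * k)) * h

private lemma fE_succ (hk : 2 ≤ k) (j : ZMod k) : fE k (j + 1) = fE k j + 2 := by
  haveI : Fact (1 < k) := ⟨by omega⟩
  have h1 : fE k (j + 1) = ((2 * ((j.val + 1) % k) : ℕ) : ZMod (2 * k)) := by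
    rw [fE, ZMod.val_add, ZMod.val_one]
    push_cast
    ring
  rw [h1, two_mul_mod]
  rw [fE]
  push_cast
  ring

private lemma fE_psiE_even {i : ZMod (2 * k)} (h : Even i.val) : fE k (psiE k i) = i := by
  have hi := ZMod.val_lt i
  have hlt : i.val / 2 < k := by omega
  have hval : (psiE k i).val = i.val / 2 := by
    rw [psiE, ZMod.val_natCast, Nat.mod_eq_of_lt hlt]
  have h2 : 2 * (i.val / 2) = i.val := by
    obtain ⟨r, hr⟩ := h; omega
  have : fE k (psiE k i) = ((2 * (i.val / 2) : ℕ) : ZMod (2 * k)) := by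
    rw [fE, hval]; push_cast; ring
  rw [this, h2]
  simp [ZMod.natCast_val, ZMod.cast_id]

private lemma fE_psiE_odd {i : ZMod (2 * k)} (h : Odd i.val) : fE k (psiE k i) + 1 = i := by
  have hi := ZMod.val_lt i
  have hlt : i.val / 2 < k := by omega
  have hval : (psiE k i).val = i.val / 2 := by
    rw [psiE, ZMod.val_natCast, Nat.mod_eq_of_lt hlt]
  have h2 : 2 * (i.val / 2) + 1 = i.val := by
    obtain ⟨r, hr⟩ := h; omega
  have : fE k (psiE k i) + 1 = ((2 * (i.val / 2) + 1 : ℕ) : ZMod (2 * k)) := by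
    rw [fE, hval]; push_cast; ring
  rw [this, h2]
  simp [ZMod.natCast_val, ZMod.cast_id]

private lemma odd_val_of_odd {i : ZMod (2 * k)} (h : Odd i) : Odd i.val := by
  obtain ⟨c, rfl⟩ := h
  have h1 : 2 * c + 1 = ((2 * c.val + 1 : ℕ) : ZMod (2 * k)) := by
    push_cast
    simp [ZMod.natCast_val, ZMod.cast_id]
  rw [h1, ZMod.val_natCast]
  rw [Nat.odd_iff, Nat.mod_mod_of_dvd _ ⟨k, rfl⟩]
  omega

private lemma odd_fE_succ (j : ZMod k) : Odd (fE k j + 1) :=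
  ⟨(j.val : ZMod (2 * k)), by rw [fE]⟩

end Aux

/-- Homomorphisms of the alternately oriented `2k`-cycle (odd positions are
sources) into a finite digraph `(V, A)` are counted by weighted colorful
`k`-cycles in the out-out wedge graph: the number of maps
`φ : ZMod (2k) → V` with `A (φ i) (φ (i-1))` and `A (φ i) (φ (i+1))` for all
odd `i` equals the sum over `g : ZMod k → V` of the product over `i` of the
number of out-out wedges with endpoints `g i` and `g (i+1)`. -/
theorem alternating_cycle_hom_count
    {V : Type*} [Fintype V] (A : V → V → Prop) (hA : Irreflexive A)
    (k : ℕ) (hk : 2 ≤ k) :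
    Nat.card {φ : ZMod (2 * k) → V //
        ∀ i : ZMod (2 * k), Odd i → A (φ i) (φ (i - 1)) ∧ A (φ i) (φ (i + 1))} =
      ∑ᶠ g : ZMod k → V, ∏ᶠ i : ZMod k,
        Nat.card {w : V // A w (g i) ∧ A w (g (i + 1))} := by
  classical
  haveI : NeZero k := ⟨by omega⟩
  haveI : NeZero (2 * k) := ⟨by omega⟩
  set P : (ZMod (2 * k) → V) → Prop := fun φ =>
    ∀ i : ZMod (2 * k), Odd i → A (φ i) (φ (i - 1)) ∧ A (φ i) (φ (i + 1)) with hP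
  have e : {φ : ZMod (2 * k) → V // P φ} ≃
      Σ g : ZMod k → V, ∀ j : ZMod k, {w : V // A w (g j) ∧ A w (g (j + 1))} := by
    refine
      { toFun := fun φ => ⟨fun j => φ.1 (fE k j), fun j => ⟨φ.1 (fE k j + 1), ?_, ?_⟩⟩
        invFun := fun p =>
          ⟨fun i => if Even i.val then p.1 (psiE k i) else (p.2 (psiE k i)).1, ?_⟩
        left_inv := ?_
        right_inv := ?_ }
    · have := (φ.2 (fE k j + 1) (odd_fE_succ j)).1
      simpa using this
    · have := (φ.2 (fE k j + 1) (odd_fE_succ j)).2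
      rw [show fE k j + 1 + 1 = fE k (j + 1) by rw [fE_succ hk]; ring] at this
      exact this
    · -- property of the constructed map
      intro i hi
      obtain ⟨g, w⟩ := p
      have hodd : Odd i.val := odd_val_of_odd hi
      have hi1 : fE k (psiE k i) + 1 = i := fE_psiE_odd hodd
      have hsub : i - 1 = fE k (psiE k i) := by
        rw [sub_eq_iff_eq_add]; exact hi1.symm
      have hadd : i + 1 = fE k (psiE k i + 1) := by
        rw [fE_succ hk]; linear_combination -hi1
      have hv1 : ¬ Even i.val := Nat.not_even_iff_odd.mpr hodd
      have hφi : (if Even i.val then g (psiE k i) else (w (psiE k i)).1) = (w (psiE k i)).1 := by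
        rw [if_neg hv1]
      constructor
      · simp only [hφi, hsub]
        rw [if_pos, psiE_fE]
        · exact (w (psiE k i)).2.1
        · rw [val_fE]; exact even_two_mul _
      · simp only [hφi, hadd]
        rw [if_pos, psiE_fE]
        · exact (w (psiE k i)).2.2
        · rw [val_fE]; exact even_two_mul _
    · rintro ⟨φ, hφ⟩
      ext i
      simp only
      by_cases h : Even i.val
      · rw [if_pos h, psiE, ← psiE, fE_psiE_even h]
      · rw [if_neg h]
        rw [show fE k (psiE k i) + 1 = i from fE_psiE_odd (Nat.not_even_iff_odd.mp h)]
    · rintro ⟨g, w⟩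
      have key : ∀ (g' : ZMod k → V)
          (w' : ∀ j : ZMod k, {w : V // A w (g' j) ∧ A w (g' (j + 1))})
          (hgg : g' = g), (∀ j, (w' j).1 = (w j).1) →
          (⟨g', w'⟩ : Σ g : ZMod k → V,
            ∀ j : ZMod k, {w : V // A w (g j) ∧ A w (g (j + 1))}) = ⟨g, w⟩ := by
        rintro g' w' rfl h
        have hw : w' = w := funext fun j => Subtype.ext (h j)
        rw [hw]
      refine key _ _ ?_ ?_
      · funext j
        simp only
        rw [if_pos, psiE_fE]
        rw [val_fE]; exact even_two_mul _
      · intro j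
        have hv : ¬ Even (fE k j + 1).val := by
          rw [val_fE_succ]; simp [Nat.even_add_one, Nat.even_mul]
        simp only
        rw [if_neg hv, psiE_fE_succ]
  rw [Nat.card_congr e, Nat.card_eq_fintype_card, Fintype.card_sigma,
    finsum_eq_sum_of_fintype]
  refine Finset.sum_congr rfl fun g _ => ?_
  rw [Fintype.card_pi, finprod_eq_prod_of_fintype]
  refine Finset.prod_congr rfl fun j _ => ?_
  rw [Nat.card_eq_fintype_card]
end

section
/- For every finite simple graph G (with any fixed endpoint-ordering of its edges), the number of 7-cycle subgraphs of the odd expanded graph G'' equals 3 times the number of 3-cycle subgraphs of G. -/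
/-- The cycle graph `C_n` on vertex set `ZMod n`: `i` and `j` are adjacent iff
they differ by `1`. -/
def cycleGraphZMod (n : ℕ) : SimpleGraph (ZMod n) :=
  SimpleGraph.fromRel (fun i j => j = i + 1)

/-- The number of `k`-cycle subgraphs of `G`: the number of subgraphs of `G`
whose underlying graph is isomorphic to the cycle graph `C_k`. -/
noncomputable def cycleCount {V : Type*} (G : SimpleGraph V) (k : ℕ) : ℕ :=
  Nat.card {H : G.Subgraph // Nonempty (H.coe ≃g cycleGraphZMod k)}

/-- The odd expanded graph `G''` of a simple graph `G` with an endpoint-ordering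
`f` of its edges: every edge `e` with ordered endpoints `(u_e, v_e)` is replaced
by a path of length `2` (through `(e,0)`) and a path of length `3` (through
`(e,1)` and `(e,2)`) between `u_e` and `v_e`. -/
def oddExpandedGraph {V : Type*} (G : SimpleGraph V) (f : G.edgeSet → V × V) :
    SimpleGraph (V ⊕ (G.edgeSet × Fin 3)) :=
  SimpleGraph.fromRel (fun x y => ∃ e : G.edgeSet,
    (x = Sum.inl (f e).1 ∧ y = Sum.inr (e, 0)) ∨
    (x = Sum.inr (e, 0) ∧ y = Sum.inl (f e).2) ∨
    (x = Sum.inl (f e).1 ∧ y = Sum.inr (e, 1)) ∨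
    (x = Sum.inr (e, 1) ∧ y = Sum.inr (e, 2)) ∨
    (x = Sum.inr (e, 2) ∧ y = Sum.inl (f e).2))

/-!
The vertices of `V` are independent in `G''`, so a 7-cycle of `G''` alternates between `V` and
the gadget vertices unless two gadget vertices are consecutive, and since 7 is odd they must be
somewhere. Two adjacent gadget vertices are the inner vertices `(e,1), (e,2)` of a 3-path, which
have no further gadget neighbour, so the cycle reads `a, (ab,0), b, (bc,0), c` followed
by the 3-path of `ca`: it is a triangle of `G` with one marked edge.

We count labelled cycles, that is copies of `C_n`. A labelled 7-cycle of `G''` is a labelled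
triangle of `G` together with a rotation, and labelled `n`-cycles are `|Aut C_n| = 2n` times as
many as `n`-cycle subgraphs, so `14 · #C₇(G'') = 7 · 6 · #C₃(G)`.
-/

open SimpleGraph

namespace SimpleGraph

variable {α β : Type*} {A : SimpleGraph α} {B : SimpleGraph β}

noncomputable def Copy.toSubgraphFiberEquiv (B' : B.Subgraph) :
    {f : Copy A B // f.toSubgraph = B'} ≃ (A ≃g B'.coe) :=
  (Equiv.ofBijective (fun e : A ≃g B'.coe => (⟨B'.coeCopy.comp e.toCopy, by
      simp [Copy.toSubgraph, Subgraph.coeCopy, Copy.comp, Subgraph.map_comp]⟩ :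
        {f : Copy A B // f.toSubgraph = B'}))
    ⟨fun e e' h =>
      RelIso.ext fun a => Subtype.ext (DFunLike.congr_fun (congrArg Subtype.val h) a),
      by
        rintro ⟨f, rfl⟩
        exact ⟨f.isoToSubgraph, Subtype.ext (Copy.ext fun a => rfl)⟩⟩).symm

noncomputable def Copy.equivIsoSubgraphProdAut :
    Copy A B ≃ {B' : B.Subgraph // Nonempty (B'.coe ≃g A)} × (A ≃g A) :=
  (Equiv.sigmaFiberEquiv fun f : Copy A B =>
      (⟨f.toSubgraph, ⟨f.isoToSubgraph.symm⟩⟩ :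
        {B' : B.Subgraph // Nonempty (B'.coe ≃g A)})).symm.trans <|
    (Equiv.sigmaCongrRight fun B' =>
      ((Equiv.subtypeEquivRight fun _ => Subtype.ext_iff).trans
        (Copy.toSubgraphFiberEquiv B'.1)).trans
          (RelIso.relIsoCongr (RelIso.refl _) B'.2.some)).trans (Equiv.sigmaEquivProd _ _)

lemma natCard_copy_eq_mul_natCard_aut :
    Nat.card (Copy A B) =
      Nat.card {B' : B.Subgraph // Nonempty (B'.coe ≃g A)} * Nat.card (A ≃g A) := by
  rw [Nat.card_congr Copy.equivIsoSubgraphProdAut, Nat.card_prod]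

end SimpleGraph

namespace cycleGraphZMod

variable {n : ℕ} {W : Type*} {Γ : SimpleGraph W}

lemma adj_iff {i j : ZMod n} :
    (cycleGraphZMod n).Adj i j ↔ i ≠ j ∧ (j = i + 1 ∨ i = j + 1) :=
  Iff.rfl

lemma adj_add_one (hn : n ≠ 1) (i : ZMod n) : (cycleGraphZMod n).Adj i (i + 1) :=
  ⟨fun h => hn (ZMod.one_eq_zero_iff.mp (by simpa using h.symm)), .inl rfl⟩

def affineIso (a s : ZMod n) (hs : s = 1 ∨ s = -1) : cycleGraphZMod n ≃g cycleGraphZMod n where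
  toFun i := a + s * i
  invFun j := s * (j - a)
  left_inv i := by rcases hs with rfl | rfl <;> ring
  right_inv j := by rcases hs with rfl | rfl <;> ring
  map_rel_iff' := by
    simp only [Equiv.coe_fn_mk, adj_iff]
    rcases hs with rfl | rfl <;> grind

lemma affineIso_apply (a s : ZMod n) (hs : s = 1 ∨ s = -1) (i : ZMod n) :
    affineIso a s hs i = a + s * i := rfl

/-- Injectivity keeps `σ` from turning back, so every step `σ (i + 1) - σ i` is the first one. -/
lemma exists_eq_affineIso (hn : 2 < n) (σ : cycleGraphZMod n ≃g cycleGraphZMod n) :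
    ∃ a s hs, σ = affineIso a s hs := by
  have : Fact (2 < n) := ⟨hn⟩
  have : NeZero n := ⟨by omega⟩
  have hadj (i : ZMod n) : σ (i + 1) = σ i + 1 ∨ σ i = σ (i + 1) + 1 :=
    (σ.map_adj_iff.mpr (adj_add_one (by omega) i)).2
  set s := σ 1 - σ 0
  have hs : s = 1 ∨ s = -1 := by
    have := hadj 0
    rw [zero_add] at this
    grind
  have h2 : (2 : ZMod n) ≠ 0 := fun h => ZMod.neg_one_ne_one (by linear_combination -h)
  have hstep (k : ℕ) : σ (k + 1) = σ k + s := by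
    induction k with
    | zero => simp [s]
    | succ k ih =>
      have hne : σ ((k + 1 : ℕ) + 1) ≠ σ k := fun h =>
        h2 (by simpa [add_assoc, one_add_one_eq_two] using σ.injective h)
      have := hadj (k + 1 : ℕ)
      push_cast at this hne ih ⊢
      grind
  have hval (k : ℕ) : σ k = σ 0 + s * k := by
    induction k with
    | zero => simp
    | succ k ih => rw [Nat.cast_succ, hstep, ih]; ring
  exact ⟨σ 0, s, hs, RelIso.ext fun i => by
    rw [affineIso_apply, ← ZMod.natCast_zmod_val i, hval]⟩

lemma natCard_aut (hn : 2 < n) : Nat.card (cycleGraphZMod n ≃g cycleGraphZMod n) = 2 * n := by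
  have : Fact (2 < n) := ⟨hn⟩
  have hbij : Function.Bijective
      fun p : ZMod n × ({1, -1} : Set (ZMod n)) => affineIso p.1 p.2.1 p.2.2 := by
    refine ⟨fun ⟨a, s, hs⟩ ⟨a', s', hs'⟩ h => ?_, fun σ => ?_⟩
    · have h0 : a + s * 0 = a' + s' * 0 := DFunLike.congr_fun h 0
      have h1 : a + s * 1 = a' + s' * 1 := DFunLike.congr_fun h 1
      simp only [mul_zero, add_zero, mul_one] at h0 h1
      subst h0
      obtain rfl := add_left_cancel h1
      rfl
    · obtain ⟨a, s, hs, rfl⟩ := exists_eq_affineIso hn σ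
      exact ⟨(a, ⟨s, hs⟩), rfl⟩
  rw [← Nat.card_eq_of_bijective _ hbij, Nat.card_prod, Nat.card_zmod, Nat.card_coe_set_eq,
    Set.ncard_pair ZMod.neg_one_ne_one.symm, mul_comm]

lemma natCard_copy_eq (hn : 2 < n) (Γ : SimpleGraph W) :
    Nat.card (Copy (cycleGraphZMod n) Γ) = 2 * n * cycleCount Γ n := by
  rw [natCard_copy_eq_mul_natCard_aut, natCard_aut hn, cycleCount, mul_comm]

def copyOfAdj (g : ZMod n → W) (hinj : Function.Injective g)
    (hadj : ∀ i, Γ.Adj (g i) (g (i + 1))) : Copy (cycleGraphZMod n) Γ :=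
  ⟨⟨g, fun {i j} h => by
    rcases h.2 with rfl | rfl
    exacts [hadj i, (hadj j).symm]⟩, hinj⟩

lemma copy_adj (hn : n ≠ 1) (c : Copy (cycleGraphZMod n) Γ) (i : ZMod n) :
    Γ.Adj (c i) (c (i + 1)) :=
  c.toHom.map_adj (adj_add_one hn i)

def triangleCopy {a b c : W} (hab : Γ.Adj a b) (hbc : Γ.Adj b c) (hca : Γ.Adj c a) :
    Copy (cycleGraphZMod 3) Γ :=
  copyOfAdj ![a, b, c]
    (by
      have := hab.ne; have := hbc.ne; have := hca.ne
      intro i j h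
      fin_cases i <;> fin_cases j <;> first | rfl | simp_all)
    (by intro i; fin_cases i; exacts [hab, hbc, hca])

def triangleEdge (t : Copy (cycleGraphZMod 3) Γ) (i : ZMod 3) : Γ.edgeSet :=
  ⟨s(t i, t (i + 1)), copy_adj (by decide) t i⟩

end cycleGraphZMod

lemma ZMod.even_of_forall_add_one_eq_not {n : ℕ} (b : ZMod n → Bool)
    (h : ∀ i, b (i + 1) = !b i) : Even n := by
  have hb (k : ℕ) : b k = b 0 ↔ Even k := by
    induction k with
    | zero => simp
    | succ k ih => rw [Nat.cast_succ, h, Nat.even_add_one, ← ih]; cases b k <;> cases b 0 <;> simp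
  simpa using hb n

def IsEndpointOrdering {V : Type*} {G : SimpleGraph V} (f : G.edgeSet → V × V) : Prop :=
  ∀ e : G.edgeSet, (e : Sym2 V) = s((f e).1, (f e).2)

namespace oddExpandedGraph

open Sum cycleGraphZMod

variable {V : Type*} {G : SimpleGraph V} {f : G.edgeSet → V × V}

lemma not_adj_inl_inl (a b : V) : ¬ (oddExpandedGraph G f).Adj (inl a) (inl b) := by
  simp [oddExpandedGraph]

lemma adj_inl_inr_iff {v : V} {e : G.edgeSet} {k : Fin 3} :
    (oddExpandedGraph G f).Adj (inl v) (inr (e, k)) ↔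
      (k ≠ 2 ∧ v = (f e).1) ∨ (k ≠ 1 ∧ v = (f e).2) := by
  simp only [oddExpandedGraph, SimpleGraph.fromRel_adj]
  fin_cases k <;> simp [-Subtype.exists]

lemma adj_inr_inr_iff {e e' : G.edgeSet} {k k' : Fin 3} :
    (oddExpandedGraph G f).Adj (inr (e, k)) (inr (e', k')) ↔
      e = e' ∧ (k = 1 ∧ k' = 2 ∨ k = 2 ∧ k' = 1) := by
  simp [oddExpandedGraph, -Subtype.exists]
  grind

lemma isRight_of_isLeft_of_adj {x y : V ⊕ (G.edgeSet × Fin 3)}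
    (h : (oddExpandedGraph G f).Adj x y) (hx : x.isLeft) : y.isRight := by
  obtain ⟨a, rfl⟩ := Sum.isLeft_iff.mp hx
  rcases y with b | q
  exacts [absurd h (not_adj_inl_inl a b), rfl]

lemma fst_ne_snd (hf : IsEndpointOrdering f) (e : G.edgeSet) : (f e).1 ≠ (f e).2 :=
  G.ne_of_adj (by rw [← SimpleGraph.mem_edgeSet, ← hf e]; exact e.2)

lemma adj_inl_inr_zero_iff (hf : IsEndpointOrdering f) {v : V} {e : G.edgeSet} :
    (oddExpandedGraph G f).Adj (inl v) (inr (e, 0)) ↔ v ∈ (e : Sym2 V) := by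
  simp [adj_inl_inr_iff, hf e]

lemma snd_eq_zero_and_fst_eq_of_adj_of_adj (hf : IsEndpointOrdering f) {a b : V} (hab : a ≠ b)
    {p : G.edgeSet × Fin 3} (ha : (oddExpandedGraph G f).Adj (inl a) (inr p))
    (hb : (oddExpandedGraph G f).Adj (inr p) (inl b)) :
    p.2 = 0 ∧ (p.1 : Sym2 V) = s(a, b) := by
  obtain ⟨e, k⟩ := p
  have hk : k = 0 := by
    rw [adj_inl_inr_iff] at ha
    rw [SimpleGraph.adj_comm, adj_inl_inr_iff] at hb
    have := fst_ne_snd hf e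
    fin_cases k <;> simp_all
  subst hk
  rw [adj_inl_inr_zero_iff hf] at ha
  rw [SimpleGraph.adj_comm, adj_inl_inr_zero_iff hf] at hb
  exact ⟨rfl, (Sym2.mem_and_mem_iff hab).mp ⟨ha, hb⟩⟩

open scoped Classical in
variable (f) in
noncomputable def threePathFrom (e : G.edgeSet) (x : V) :
    (V ⊕ (G.edgeSet × Fin 3)) × (V ⊕ (G.edgeSet × Fin 3)) :=
  if x = (f e).1 then (inr (e, 1), inr (e, 2)) else (inr (e, 2), inr (e, 1))

lemma adj_threePathFrom (hf : IsEndpointOrdering f) {e : G.edgeSet} {x y : V}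
    (h : (e : Sym2 V) = s(x, y)) :
    (oddExpandedGraph G f).Adj (inl x) (threePathFrom f e x).1 ∧
      (oddExpandedGraph G f).Adj (threePathFrom f e x).1 (threePathFrom f e x).2 ∧
      (oddExpandedGraph G f).Adj (threePathFrom f e x).2 (inl y) := by
  rw [hf e, Sym2.eq_iff] at h
  have := fst_ne_snd hf e
  rcases h with ⟨rfl, rfl⟩ | ⟨rfl, rfl⟩
  · simp [threePathFrom, adj_inl_inr_iff, adj_inr_inr_iff, SimpleGraph.adj_comm _ _ (inl _)]
  · simp [threePathFrom, this.symm, adj_inl_inr_iff, adj_inr_inr_iff,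
      SimpleGraph.adj_comm _ _ (inl _)]

lemma fst_eq_and_eq_threePathFrom (hf : IsEndpointOrdering f) {x y : V}
    {p q : G.edgeSet × Fin 3} (hx : (oddExpandedGraph G f).Adj (inl x) (inr p))
    (hpq : (oddExpandedGraph G f).Adj (inr p) (inr q))
    (hy : (oddExpandedGraph G f).Adj (inr q) (inl y)) :
    (p.1 : Sym2 V) = s(x, y) ∧ (inr p, inr q) = threePathFrom f p.1 x := by
  obtain ⟨e, k⟩ := p
  obtain ⟨e', k'⟩ := q
  rw [adj_inr_inr_iff] at hpq
  obtain ⟨rfl, ⟨rfl, rfl⟩ | ⟨rfl, rfl⟩⟩ := hpq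
  all_goals
    rw [adj_inl_inr_iff] at hx
    rw [SimpleGraph.adj_comm, adj_inl_inr_iff] at hy
    simp at hx hy
    subst hx hy
  · simp [threePathFrom, hf e]
  · simp [threePathFrom, hf e, Sym2.eq_swap, fst_ne_snd hf e |>.symm]

variable (f) in
noncomputable def triangleCycle (t : Copy (cycleGraphZMod 3) G) :
    ZMod 7 → V ⊕ (G.edgeSet × Fin 3) :=
  ![inl (t 0), inr (triangleEdge t 0, 0), inl (t 1), inr (triangleEdge t 1, 0), inl (t 2),
    (threePathFrom f (triangleEdge t 2) (t 2)).1, (threePathFrom f (triangleEdge t 2) (t 2)).2]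

lemma triangleCycle_adj (hf : IsEndpointOrdering f) (t : Copy (cycleGraphZMod 3) G)
    (i : ZMod 7) :
    (oddExpandedGraph G f).Adj (triangleCycle f t i) (triangleCycle f t (i + 1)) := by
  have h := adj_threePathFrom hf (e := triangleEdge t 2) (x := t 2) (y := t 0) rfl
  fin_cases i
  · exact (adj_inl_inr_zero_iff hf).mpr (Sym2.mem_mk_left _ _)
  · exact ((adj_inl_inr_zero_iff hf).mpr (Sym2.mem_mk_right _ _)).symm
  · exact (adj_inl_inr_zero_iff hf).mpr (Sym2.mem_mk_left _ _)
  · exact ((adj_inl_inr_zero_iff hf).mpr (Sym2.mem_mk_right _ _)).symm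
  exacts [h.1, h.2.1, h.2.2]

lemma triangleCycle_injective (t : Copy (cycleGraphZMod 3) G) :
    Function.Injective (triangleCycle f t) := by
  have he : triangleEdge t 0 ≠ triangleEdge t 1 := by
    intro h
    rcases Sym2.eq_iff.mp (congrArg Subtype.val h) with ⟨h, -⟩ | ⟨h, -⟩ <;>
      exact absurd (t.injective h) (by decide)
  have h01 : t 0 ≠ t 1 := fun h => absurd (t.injective h) (by decide)
  have h02 : t 0 ≠ t 2 := fun h => absurd (t.injective h) (by decide)
  have h12 : t 1 ≠ t 2 := fun h => absurd (t.injective h) (by decide)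
  unfold triangleCycle threePathFrom
  split_ifs
  all_goals
    intro i j h
    fin_cases i <;> fin_cases j <;> first | rfl | simp_all

lemma triangleCycle_isRight_and_isRight_iff (t : Copy (cycleGraphZMod 3) G) (i : ZMod 7) :
    (triangleCycle f t i).isRight ∧ (triangleCycle f t (i + 1)).isRight ↔ i = 5 := by
  have hpattern (j : ZMod 7) :
      (triangleCycle f t j).isRight = decide (j ∈ ({1, 3, 5, 6} : Finset (ZMod 7))) := by
    unfold triangleCycle threePathFrom
    split_ifs <;> fin_cases j <;> rfl
  simp only [hpattern]
  revert i
  decide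

noncomputable def triangleCycleCopy (hf : IsEndpointOrdering f) (t : Copy (cycleGraphZMod 3) G) :
    Copy (cycleGraphZMod 7) (oddExpandedGraph G f) :=
  copyOfAdj (triangleCycle f t) (triangleCycle_injective t) (triangleCycle_adj hf t)

section SevenCycle

variable (c : Copy (cycleGraphZMod 7) (oddExpandedGraph G f))

/-- Otherwise `isLeft` would properly 2-colour the odd cycle. -/
lemma exists_isRight_isRight : ∃ i, (c i).isRight ∧ (c (i + 1)).isRight := by
  by_contra! h
  have h7 : Even 7 := ZMod.even_of_forall_add_one_eq_not (fun i => (c i).isLeft) fun i => by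
    cases hi : (c i).isLeft
    · exact Sum.not_isRight.mp (h i (Sum.isLeft_eq_false.mp hi))
    · simpa using isRight_of_isLeft_of_adj (copy_adj (by decide) c i) hi
  exact absurd h7 (by decide)

lemma not_isRight_three (i : ZMod 7) :
    ¬ ((c i).isRight ∧ (c (i + 1)).isRight ∧ (c (i + 2)).isRight) := by
  rintro ⟨h₀, h₁, h₂⟩
  obtain ⟨⟨e, k⟩, hp⟩ := Sum.isRight_iff.mp h₀
  obtain ⟨⟨e', k'⟩, hq⟩ := Sum.isRight_iff.mp h₁
  obtain ⟨⟨e'', k''⟩, hr⟩ := Sum.isRight_iff.mp h₂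
  have hpq := copy_adj (by decide) c i
  have hqr := copy_adj (by decide) c (i + 1)
  rw [add_assoc, one_add_one_eq_two] at hqr
  rw [hp, hq, adj_inr_inr_iff] at hpq
  rw [hq, hr, adj_inr_inr_iff] at hqr
  have : c i = c (i + 2) := by grind
  exact absurd (c.injective this) (by grind)

lemma exists_eq_triangleCycle (hf : IsEndpointOrdering f) (h5 : (c 5).isRight)
    (h6 : (c 6).isRight) : ∃ t, ∀ i, c i = triangleCycle f t i := by
  have adj := copy_adj (by decide) c
  have h4 : (c 4).isLeft := Sum.not_isRight.mp fun h => not_isRight_three c 4 ⟨h, h5, h6⟩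
  have h0 : (c 0).isLeft := Sum.not_isRight.mp fun h => not_isRight_three c 5 ⟨h5, h6, h⟩
  have h1 : (c 1).isRight := isRight_of_isLeft_of_adj (adj 0) h0
  have h3 : (c 3).isRight := isRight_of_isLeft_of_adj (adj 3).symm h4
  have h2 : (c 2).isLeft := Sum.not_isRight.mp fun h => not_isRight_three c 1 ⟨h1, h, h3⟩
  obtain ⟨a, ha⟩ := Sum.isLeft_iff.mp h0
  obtain ⟨b, hb⟩ := Sum.isLeft_iff.mp h2
  obtain ⟨d, hd⟩ := Sum.isLeft_iff.mp h4
  obtain ⟨p₁, hp₁⟩ := Sum.isRight_iff.mp h1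
  obtain ⟨p₃, hp₃⟩ := Sum.isRight_iff.mp h3
  obtain ⟨p₅, hp₅⟩ := Sum.isRight_iff.mp h5
  obtain ⟨p₆, hp₆⟩ := Sum.isRight_iff.mp h6
  have hne {x y : V} {i j : ZMod 7} (hx : c i = inl x) (hy : c j = inl y) (hij : i ≠ j) :
      x ≠ y :=
    fun h => hij (c.injective (show c i = c j by rw [hx, hy, h]))
  obtain ⟨hk₁, he₁⟩ := snd_eq_zero_and_fst_eq_of_adj_of_adj hf (hne ha hb (by decide))
    (ha ▸ hp₁ ▸ adj 0) (hp₁ ▸ hb ▸ adj 1)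
  obtain ⟨hk₃, he₃⟩ := snd_eq_zero_and_fst_eq_of_adj_of_adj hf (hne hb hd (by decide))
    (hb ▸ hp₃ ▸ adj 2) (hp₃ ▸ hd ▸ adj 3)
  obtain ⟨he₅, hpath⟩ := fst_eq_and_eq_threePathFrom hf
    (hd ▸ hp₅ ▸ adj 4) (hp₅ ▸ hp₆ ▸ adj 5) (hp₆ ▸ ha ▸ adj 6)
  have hedge {x y : V} {e : G.edgeSet} (h : (e : Sym2 V) = s(x, y)) : G.Adj x y := by
    rw [← SimpleGraph.mem_edgeSet, ← h]; exact e.2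
  let t := triangleCopy (hedge he₁) (hedge he₃) (hedge he₅)
  rw [show p₅.1 = triangleEdge t 2 from Subtype.ext he₅] at hpath
  refine ⟨t, fun i => ?_⟩
  fin_cases i
  · exact ha
  · exact hp₁.trans (congrArg inr (Prod.ext (Subtype.ext he₁) hk₁))
  · exact hb
  · exact hp₃.trans (congrArg inr (Prod.ext (Subtype.ext he₃) hk₃))
  · exact hd
  · exact hp₅.trans (congrArg Prod.fst hpath)
  · exact hp₆.trans (congrArg Prod.snd hpath)

end SevenCycle

noncomputable def rotatedTriangleCycle (hf : IsEndpointOrdering f)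
    (p : ZMod 7 × Copy (cycleGraphZMod 3) G) : Copy (cycleGraphZMod 7) (oddExpandedGraph G f) :=
  (triangleCycleCopy hf p.2).comp (affineIso (-p.1) 1 (.inl rfl)).toCopy

lemma rotatedTriangleCycle_apply (hf : IsEndpointOrdering f)
    (p : ZMod 7 × Copy (cycleGraphZMod 3) G) (i : ZMod 7) :
    rotatedTriangleCycle hf p i = triangleCycle f p.2 (-p.1 + i) := by
  simp [rotatedTriangleCycle, triangleCycleCopy, copyOfAdj, affineIso_apply]

/-- The rotation is read off as the position of the two consecutive gadget vertices. -/
lemma rotatedTriangleCycle_bijective (hf : IsEndpointOrdering f) :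
    Function.Bijective (rotatedTriangleCycle hf) := by
  refine ⟨fun ⟨r, t⟩ ⟨r', t'⟩ h => ?_, fun c => ?_⟩
  · have h' (i : ZMod 7) : triangleCycle f t (-r + i) = triangleCycle f t' (-r' + i) := by
      simpa [rotatedTriangleCycle_apply] using DFunLike.congr_fun h i
    have hpos (r : ZMod 7) (t : Copy (cycleGraphZMod 3) G) (i : ZMod 7) :
        (triangleCycle f t (-r + i)).isRight ∧ (triangleCycle f t (-r + (i + 1))).isRight ↔
          i = r + 5 := by
      rw [← add_assoc, triangleCycle_isRight_and_isRight_iff, neg_add_eq_iff_eq_add]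
    obtain rfl : r = r' := add_right_cancel <|
      (hpos r' t' (r + 5)).mp (by rw [← h', ← h']; exact (hpos r t (r + 5)).mpr rfl)
    have h'' (i : ZMod 7) : triangleCycle f t i = triangleCycle f t' i := by
      simpa using h' (r + i)
    refine Prod.ext rfl (Copy.ext fun i => ?_)
    fin_cases i
    exacts [Sum.inl_injective (h'' 0), Sum.inl_injective (h'' 2), Sum.inl_injective (h'' 4)]
  · obtain ⟨i, hi, hi₁⟩ := exists_isRight_isRight c
    let c' := c.comp (affineIso (i - 5) 1 (.inl rfl)).toCopy
    have hc' (j : ZMod 7) : c' j = c (i - 5 + j) := by simp [c', affineIso_apply]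
    obtain ⟨t, ht⟩ := exists_eq_triangleCycle c' hf
      (by rwa [hc', sub_add_cancel]) (by rwa [hc', show i - 5 + 6 = i + 1 by ring])
    refine ⟨(i - 5, t), Copy.ext fun j => ?_⟩
    rw [rotatedTriangleCycle_apply, ← ht, hc', add_neg_cancel_left]

end oddExpandedGraph

theorem oddExpanded_sevenCycles_general {V : Type*} (G : SimpleGraph V)
    (f : G.edgeSet → V × V)
    (hf : ∀ e : G.edgeSet, (e : Sym2 V) = s((f e).1, (f e).2)) :
    cycleCount (oddExpandedGraph G f) 7 = 3 * cycleCount G 3 := by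
  have h := Nat.card_congr
    (Equiv.ofBijective _ (oddExpandedGraph.rotatedTriangleCycle_bijective (f := f) hf))
  rw [Nat.card_prod, Nat.card_zmod, cycleGraphZMod.natCard_copy_eq (by norm_num),
    cycleGraphZMod.natCard_copy_eq (by norm_num)] at h
  omega

/-- The number of `7`-cycle subgraphs of the odd expanded graph `G''` equals
`3` times the number of `3`-cycle (triangle) subgraphs of `G`. -/
theorem oddExpanded_sevenCycles {V : Type*} [Fintype V] (G : SimpleGraph V)
    (f : G.edgeSet → V × V)
    (hf : ∀ e : G.edgeSet, (e : Sym2 V) = s((f e).1, (f e).2)) :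
    cycleCount (oddExpandedGraph G f) 7 = 3 * cycleCount G 3 :=
  oddExpanded_sevenCycles_general G f hf
end

section
/- For every finite simple graph G (with any fixed endpoint-ordering of its edges), the number of 9-cycle subgraphs of the odd expanded graph G'' equals the number of 3-cycle subgraphs of G plus 4 times the number of 4-cycle subgraphs of G. -/
/-!
Every vertex `(e, t)` of `G''` has exactly two neighbours, so a cycle of `G''` is the subgraph
induced on its vertex set, and along a `9`-cycle consecutive vertices of `G` are joined through the
interior of the short (length `2`) or the long (length `3`) path of an edge of `G`. As
`2a + 3b = 9` forces `(a, b) = (0, 3)` or `(3, 1)`, the vertices of `G` on the cycle span a triangle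
of `G` whose three edges are all expanded by long paths, or a `4`-cycle of `G` with exactly one edge
expanded by its long path. Conversely every triangle yields one `9`-cycle, and every `4`-cycle
yields four, one for each choice of the long edge.
-/

open Function Sum

theorem cycleGraphZMod_adj {n : ℕ} {i j : ZMod n} :
    (cycleGraphZMod n).Adj i j ↔ i ≠ j ∧ (j = i + 1 ∨ i = j + 1) :=
  SimpleGraph.fromRel_adj _ i j

theorem ZMod.ne_add_one {n : ℕ} (hn : n ≠ 1) (i : ZMod n) : i ≠ i + 1 := by
  have := ZMod.nontrivial_iff.2 hn
  simp

theorem ZMod.add_one_ne_sub_one {n : ℕ} (hn : 2 < n) (i : ZMod n) : i + 1 ≠ i - 1 := by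
  intro h
  have h2 : ((2 : ℕ) : ZMod n) = 0 := by push_cast; linear_combination h
  exact absurd (Nat.le_of_dvd two_pos ((ZMod.natCast_eq_zero_iff 2 n).1 h2)) (by omega)

set_option maxRecDepth 4000 in
theorem ZMod.nine_exists_shift_of_gaps_two_or_three : ∀ p : ZMod 9 → Bool,
    (∀ i, p i = true → p (i + 1) = false) →
    (∀ i, p i = true ∨ p (i + 1) = true ∨ p (i + 2) = true) →
    ∃ j : ZMod 9, (∀ t, p (j + t) = decide (t = 0 ∨ t = 3 ∨ t = 6)) ∨
      (∀ t, p (j + t) = decide (t = 0 ∨ t = 3 ∨ t = 5 ∨ t = 7)) := by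
  decide

namespace SimpleGraph

variable {W : Type*} {Γ : SimpleGraph W} {n : ℕ}

def cycleSubgraph (w : ZMod n → W) (hw : ∀ i, Γ.Adj (w i) (w (i + 1))) : Γ.Subgraph where
  verts := Set.range w
  Adj x y := ∃ i, s(x, y) = s(w i, w (i + 1))
  adj_sub := by
    rintro x y ⟨i, hi⟩
    rw [← mem_edgeSet, hi]
    exact hw i
  edge_vert := by
    rintro x y ⟨i, hi⟩
    rcases Sym2.eq_iff.1 hi with ⟨rfl, -⟩ | ⟨rfl, -⟩
    exacts [⟨i, rfl⟩, ⟨i + 1, rfl⟩]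
  symm := ⟨fun _ _ ⟨i, hi⟩ => ⟨i, Sym2.eq_swap.trans hi⟩⟩

variable {w : ZMod n → W} {hw : ∀ i, Γ.Adj (w i) (w (i + 1))}

@[simp] theorem cycleSubgraph_verts : (cycleSubgraph w hw).verts = Set.range w := rfl

theorem cycleSubgraph_adj {x y : W} :
    (cycleSubgraph w hw).Adj x y ↔ ∃ i, s(x, y) = s(w i, w (i + 1)) := Iff.rfl

theorem mem_cycleSubgraph_edgeSet {q : Sym2 W} :
    q ∈ (cycleSubgraph w hw).edgeSet ↔ ∃ i, q = s(w i, w (i + 1)) := by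
  induction q using Sym2.ind with
  | _ x y => rfl

theorem cycleSubgraph_rotate (j : ZMod n) :
    cycleSubgraph (fun i => w (j + i)) (fun i => add_assoc j i 1 ▸ hw (j + i)) =
      cycleSubgraph w hw := by
  have hrot : Surjective (j + ·) := add_left_surjective j
  ext x y
  · exact Set.ext_iff.1 (hrot.range_comp w) x
  · simp only [cycleSubgraph_adj, ← add_assoc]
    exact (hrot.exists (p := fun i => s(x, y) = s(w i, w (i + 1)))).symm

theorem nonempty_iso_cycleSubgraph (hn : n ≠ 1) (hinj : Injective w) :
    Nonempty ((cycleSubgraph w hw).coe ≃g cycleGraphZMod n) := by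
  refine ⟨RelIso.symm ⟨Equiv.ofInjective w hinj, fun {i j} => ?_⟩⟩
  change (∃ k, s(w i, w j) = s(w k, w (k + 1))) ↔ _
  simp only [cycleGraphZMod_adj, Sym2.eq_iff, hinj.eq_iff]
  constructor
  · rintro ⟨k, ⟨rfl, rfl⟩ | ⟨rfl, rfl⟩⟩
    exacts [⟨ZMod.ne_add_one hn _, Or.inl rfl⟩, ⟨(ZMod.ne_add_one hn _).symm, Or.inr rfl⟩]
  · rintro ⟨-, rfl | rfl⟩
    exacts [⟨i, Or.inl ⟨rfl, rfl⟩⟩, ⟨j, Or.inr ⟨rfl, rfl⟩⟩]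

theorem Subgraph.exists_eq_cycleSubgraph (hn : n ≠ 1) {H : Γ.Subgraph}
    (φ : H.coe ≃g cycleGraphZMod n) :
    ∃ (w : ZMod n → W) (hw : ∀ i, Γ.Adj (w i) (w (i + 1))),
      Injective w ∧ H = cycleSubgraph w hw := by
  set w : ZMod n → W := fun i => φ.symm i
  have hrange : Set.range w = H.verts :=
    Set.ext fun x =>
      ⟨fun ⟨i, hi⟩ => hi ▸ (φ.symm i).2, fun hx => ⟨φ ⟨x, hx⟩, by simp [w]⟩⟩
  have hadj : ∀ i j, H.Adj (w i) (w j) ↔ (cycleGraphZMod n).Adj i j :=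
    fun i j => φ.symm.map_rel_iff
  have hH : ∀ i, H.Adj (w i) (w (i + 1)) :=
    fun i => (hadj _ _).2 (cycleGraphZMod_adj.2 ⟨ZMod.ne_add_one hn i, Or.inl rfl⟩)
  refine ⟨w, fun i => H.adj_sub (hH i), fun i j h => φ.symm.injective (Subtype.ext h), ?_⟩
  ext x y
  · exact Set.ext_iff.1 hrange.symm x
  · rw [cycleSubgraph_adj]
    constructor
    · intro hxy
      obtain ⟨i, rfl⟩ := hrange.symm ▸ H.edge_vert hxy
      obtain ⟨j, rfl⟩ := hrange.symm ▸ H.edge_vert hxy.symm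
      obtain ⟨-, rfl | rfl⟩ := cycleGraphZMod_adj.1 ((hadj i j).1 hxy)
      exacts [⟨i, rfl⟩, ⟨j, Sym2.eq_swap⟩]
    · rintro ⟨i, hi⟩
      rcases Sym2.eq_iff.1 hi with ⟨rfl, rfl⟩ | ⟨rfl, rfl⟩
      exacts [hH i, (hH i).symm]

theorem cycleSubgraph_eq_induce (hn : 2 < n) (hinj : Injective w)
    (hΓ : ∀ x y, Γ.Adj x y →
      (Γ.neighborSet x).encard ≤ 2 ∨ (Γ.neighborSet y).encard ≤ 2) :
    cycleSubgraph w hw = (⊤ : Γ.Subgraph).induce (Set.range w) := by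
  -- at a vertex with at most two neighbours, the two cycle edges are all the edges
  have hnbr : ∀ i y, Γ.Adj (w i) y → (Γ.neighborSet (w i)).encard ≤ 2 →
      (cycleSubgraph w hw).Adj (w i) y := by
    intro i y hy hdeg
    have hpair : {w (i + 1), w (i - 1)} ⊆ Γ.neighborSet (w i) := by
      refine Set.pair_subset (hw i) ?_
      simpa using (hw (i - 1)).symm
    have hne : w (i + 1) ≠ w (i - 1) := hinj.ne (ZMod.add_one_ne_sub_one hn i)
    have := (Set.toFinite _).eq_of_subset_of_encard_le hpair (by rwa [Set.encard_pair hne])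
    rcases (this ▸ hy : y ∈ ({w (i + 1), w (i - 1)} : Set W)) with rfl | rfl
    · exact ⟨i, rfl⟩
    · exact ⟨i - 1, by rw [sub_add_cancel, Sym2.eq_swap]⟩
  ext x y
  · rfl
  · simp only [Subgraph.induce_adj, Subgraph.top_adj]
    constructor
    · intro h
      exact ⟨(cycleSubgraph w hw).edge_vert h, (cycleSubgraph w hw).edge_vert h.symm,
        (cycleSubgraph w hw).adj_sub h⟩
    · rintro ⟨⟨i, rfl⟩, ⟨j, rfl⟩, hxy⟩
      rcases hΓ _ _ hxy with hdeg | hdeg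
      exacts [hnbr i _ hxy hdeg, (hnbr j _ hxy.symm hdeg).symm]

theorem injective_sym2_mk_add_one (hn : 2 < n) (hinj : Injective w) :
    Injective fun i => s(w i, w (i + 1)) := by
  intro i j h
  rcases Sym2.eq_iff.1 h with ⟨h1, -⟩ | ⟨h1, h2⟩
  · exact hinj h1
  · have hji : j = i + 1 := (hinj h2).symm
    exact absurd (hji.symm.trans (eq_sub_of_add_eq (hinj h1).symm)) (ZMod.add_one_ne_sub_one hn i)

theorem Subgraph.natCard_edgeSet_of_iso (hn : 2 < n) {H : Γ.Subgraph}
    (φ : H.coe ≃g cycleGraphZMod n) : Nat.card H.edgeSet = n := by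
  obtain ⟨w, hw, hinj, rfl⟩ := H.exists_eq_cycleSubgraph (by omega) φ
  have hedges : (cycleSubgraph w hw).edgeSet = Set.range fun i => s(w i, w (i + 1)) :=
    Set.ext fun q => mem_cycleSubgraph_edgeSet.trans (by simp [eq_comm])
  rw [hedges, Nat.card_range_of_injective (injective_sym2_mk_add_one hn hinj), Nat.card_zmod]

end SimpleGraph

section OddExpandedGraph

variable {V : Type*} {G : SimpleGraph V} {f : G.edgeSet → V × V}

theorem oddExpandedGraph_not_adj_inl_inl (a b : V) :
    ¬(oddExpandedGraph G f).Adj (inl a) (inl b) := by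
  simp [oddExpandedGraph]

theorem oddExpandedGraph_adj_inr_zero {x : V ⊕ (G.edgeSet × Fin 3)} {e : G.edgeSet} :
    (oddExpandedGraph G f).Adj x (inr (e, 0)) ↔ x = inl (f e).1 ∨ x = inl (f e).2 := by
  simp only [oddExpandedGraph, SimpleGraph.fromRel_adj]
  aesop

theorem oddExpandedGraph_adj_inr_one {x : V ⊕ (G.edgeSet × Fin 3)} {e : G.edgeSet} :
    (oddExpandedGraph G f).Adj x (inr (e, 1)) ↔ x = inl (f e).1 ∨ x = inr (e, 2) := by
  simp only [oddExpandedGraph, SimpleGraph.fromRel_adj]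
  aesop

theorem oddExpandedGraph_adj_inr_two {x : V ⊕ (G.edgeSet × Fin 3)} {e : G.edgeSet} :
    (oddExpandedGraph G f).Adj x (inr (e, 2)) ↔ x = inr (e, 1) ∨ x = inl (f e).2 := by
  simp only [oddExpandedGraph, SimpleGraph.fromRel_adj]
  aesop

theorem oddExpandedGraph_encard_neighborSet_inr_le (p : G.edgeSet × Fin 3) :
    ((oddExpandedGraph G f).neighborSet (inr p)).encard ≤ 2 := by
  obtain ⟨e, t⟩ := p
  obtain ⟨x, y, hxy⟩ : ∃ x y, (oddExpandedGraph G f).neighborSet (inr (e, t)) ⊆ {x, y} := by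
    obtain rfl | rfl | rfl : t = 0 ∨ t = 1 ∨ t = 2 := by omega
    · exact ⟨_, _, fun z hz => oddExpandedGraph_adj_inr_zero.1 hz.symm⟩
    · exact ⟨_, _, fun z hz => oddExpandedGraph_adj_inr_one.1 hz.symm⟩
    · exact ⟨_, _, fun z hz => oddExpandedGraph_adj_inr_two.1 hz.symm⟩
  calc _ ≤ ({x, y} : Set _).encard := Set.encard_le_encard hxy
    _ ≤ 2 := (Set.encard_insert_le _ _).trans (by norm_num)

theorem oddExpandedGraph_encard_neighborSet_le_two_of_adj {x y : V ⊕ (G.edgeSet × Fin 3)}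
    (h : (oddExpandedGraph G f).Adj x y) :
    ((oddExpandedGraph G f).neighborSet x).encard ≤ 2 ∨
      ((oddExpandedGraph G f).neighborSet y).encard ≤ 2 := by
  rcases x with a | p
  · rcases y with b | q
    · exact absurd h (oddExpandedGraph_not_adj_inl_inl a b)
    · exact Or.inr (oddExpandedGraph_encard_neighborSet_inr_le q)
  · exact Or.inl (oddExpandedGraph_encard_neighborSet_inr_le p)

theorem oddExpandedGraph_eq_of_adj_inr_of_adj_inr {x y z : G.edgeSet × Fin 3}
    (hxy : (oddExpandedGraph G f).Adj (inr x) (inr y))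
    (hyz : (oddExpandedGraph G f).Adj (inr y) (inr z)) : x = z := by
  obtain ⟨e, t⟩ := y
  obtain rfl | rfl | rfl : t = 0 ∨ t = 1 ∨ t = 2 := by omega
  · simp [oddExpandedGraph_adj_inr_zero] at hxy
  · have := oddExpandedGraph_adj_inr_one.1 hyz.symm
    simp_all [oddExpandedGraph_adj_inr_one]
  · have := oddExpandedGraph_adj_inr_two.1 hyz.symm
    simp_all [oddExpandedGraph_adj_inr_two]

end OddExpandedGraph

section Paths

variable {V : Type*} {G : SimpleGraph V} (f : G.edgeSet → V × V) {a b : V}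

open Classical in
noncomputable def longPathFst (h : G.Adj a b) : G.edgeSet × Fin 3 :=
  (⟨s(a, b), h⟩, if (f ⟨s(a, b), h⟩).1 = a then 1 else 2)

open Classical in
noncomputable def longPathSnd (h : G.Adj a b) : G.edgeSet × Fin 3 :=
  (⟨s(a, b), h⟩, if (f ⟨s(a, b), h⟩).1 = a then 2 else 1)

def shortPathMid (h : G.Adj a b) : G.edgeSet × Fin 3 := (⟨s(a, b), h⟩, 0)

theorem longPathFst_ne_longPathSnd (h : G.Adj a b) : longPathFst f h ≠ longPathSnd f h := by
  unfold longPathFst longPathSnd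
  split_ifs <;> simp

theorem eq_longPathFst_or_eq_longPathSnd (h : G.Adj a b) {t : Fin 3} (ht : t ≠ 0) :
    (⟨s(a, b), h⟩, t) = longPathFst f h ∨ (⟨s(a, b), h⟩, t) = longPathSnd f h := by
  unfold longPathFst longPathSnd
  split_ifs <;> simp <;> omega

variable {f} (hf : ∀ e : G.edgeSet, (e : Sym2 V) = s((f e).1, (f e).2))
include hf

theorem oddExpandedGraph_adj_longPath (h : G.Adj a b) :
    (oddExpandedGraph G f).Adj (inl a) (inr (longPathFst f h)) ∧
      (oddExpandedGraph G f).Adj (inr (longPathFst f h)) (inr (longPathSnd f h)) ∧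
      (oddExpandedGraph G f).Adj (inr (longPathSnd f h)) (inl b) := by
  rw [SimpleGraph.adj_comm _ (inr (longPathSnd f h))]
  simp only [longPathFst, longPathSnd]
  rcases Sym2.eq_iff.1 (hf ⟨s(a, b), h⟩) with ⟨ha, hb⟩ | ⟨ha, hb⟩
  · simp [← ha, ← hb, oddExpandedGraph_adj_inr_one, oddExpandedGraph_adj_inr_two]
  · simp [← ha, ← hb, h.ne.symm, oddExpandedGraph_adj_inr_one, oddExpandedGraph_adj_inr_two]

theorem exists_eq_longPath {x y : G.edgeSet × Fin 3}
    (hax : (oddExpandedGraph G f).Adj (inl a) (inr x))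
    (hxy : (oddExpandedGraph G f).Adj (inr x) (inr y))
    (hyb : (oddExpandedGraph G f).Adj (inr y) (inl b)) :
    ∃ h : G.Adj a b, x = longPathFst f h ∧ y = longPathSnd f h := by
  obtain ⟨e, t⟩ := y
  have he : s((f e).1, (f e).2) ∈ G.edgeSet := hf e ▸ e.2
  rw [SimpleGraph.adj_comm] at hyb
  obtain rfl | rfl | rfl : t = 0 ∨ t = 1 ∨ t = 2 := by omega
  · simp [oddExpandedGraph_adj_inr_zero] at hxy
  · obtain rfl : x = (e, 2) := by simpa [oddExpandedGraph_adj_inr_one] using hxy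
    obtain rfl : a = (f e).2 := by simpa [oddExpandedGraph_adj_inr_two] using hax
    obtain rfl : b = (f e).1 := by simpa [oddExpandedGraph_adj_inr_one] using hyb
    have hmk : (⟨s((f e).2, (f e).1), he.symm⟩ : G.edgeSet) = e :=
      Subtype.ext (Sym2.eq_swap.trans (hf e).symm)
    exact ⟨he.symm, by simp [longPathFst, longPathSnd, hmk, he.ne]⟩
  · obtain rfl : x = (e, 1) := by simpa [oddExpandedGraph_adj_inr_two] using hxy
    obtain rfl : a = (f e).1 := by simpa [oddExpandedGraph_adj_inr_one] using hax
    obtain rfl : b = (f e).2 := by simpa [oddExpandedGraph_adj_inr_two] using hyb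
    have hmk : (⟨s((f e).1, (f e).2), he⟩ : G.edgeSet) = e := Subtype.ext (hf e).symm
    exact ⟨he, by simp [longPathFst, longPathSnd, hmk]⟩

theorem oddExpandedGraph_adj_shortPath (h : G.Adj a b) :
    (oddExpandedGraph G f).Adj (inl a) (inr (shortPathMid h)) ∧
      (oddExpandedGraph G f).Adj (inr (shortPathMid h)) (inl b) := by
  rw [shortPathMid, SimpleGraph.adj_comm _ (inr _), oddExpandedGraph_adj_inr_zero,
    oddExpandedGraph_adj_inr_zero]
  rcases Sym2.eq_iff.1 (hf ⟨s(a, b), h⟩) with ⟨ha, hb⟩ | ⟨ha, hb⟩ <;>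
    simp [← ha, ← hb]

theorem exists_eq_shortPath (hab : a ≠ b) {x : G.edgeSet × Fin 3}
    (hax : (oddExpandedGraph G f).Adj (inl a) (inr x))
    (hxb : (oddExpandedGraph G f).Adj (inr x) (inl b)) :
    ∃ h : G.Adj a b, x = shortPathMid h := by
  obtain ⟨e, t⟩ := x
  rw [SimpleGraph.adj_comm] at hxb
  obtain rfl | rfl | rfl : t = 0 ∨ t = 1 ∨ t = 2 := by omega
  · simp only [oddExpandedGraph_adj_inr_zero, inl.injEq] at hax hxb
    have he : (e : Sym2 V) = s(a, b) := by
      rw [hf e]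
      rcases hax with rfl | rfl <;> rcases hxb with rfl | rfl <;> simp_all [Sym2.eq_swap]
    exact ⟨(he ▸ e.2 : s(a, b) ∈ G.edgeSet), Prod.ext (Subtype.ext he) rfl⟩
  · simp only [oddExpandedGraph_adj_inr_one, inl.injEq, reduceCtorEq, or_false] at hax hxb
    exact absurd (hax.trans hxb.symm) hab
  · simp only [oddExpandedGraph_adj_inr_two, inl.injEq, reduceCtorEq, false_or] at hax hxb
    exact absurd (hax.trans hxb.symm) hab

end Paths

section Expansion

variable {V : Type*} {G : SimpleGraph V}

/-- The vertex set of the subgraph of `G''` in which every edge of `K` lying in `L` is replaced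
by its path of length `3` and every other edge of `K` by its path of length `2`. -/
def expansionVerts (K : G.Subgraph) (L : Set (Sym2 V)) : Set (V ⊕ (G.edgeSet × Fin 3)) :=
  Sum.elim (· ∈ K.verts) fun p => ↑p.1 ∈ K.edgeSet ∧ (↑p.1 ∈ L ↔ p.2 ≠ 0)

variable {K : G.Subgraph} {L : Set (Sym2 V)}

@[simp] theorem inl_mem_expansionVerts {a : V} : inl a ∈ expansionVerts K L ↔ a ∈ K.verts :=
  Iff.rfl

@[simp] theorem inr_mem_expansionVerts {e : G.edgeSet} {t : Fin 3} :
    inr (e, t) ∈ expansionVerts K L ↔ ↑e ∈ K.edgeSet ∧ (↑e ∈ L ↔ t ≠ 0) :=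
  Iff.rfl

theorem eq_of_expansionVerts_eq {K' : G.Subgraph} {L' : Set (Sym2 V)}
    (hL : L ⊆ K.edgeSet) (hL' : L' ⊆ K'.edgeSet)
    (h : expansionVerts K L = expansionVerts K' L') : K = K' ∧ L = L' := by
  have hmem := Set.ext_iff.1 h
  have hedge : ∀ e : G.edgeSet,
      (↑e ∈ K.edgeSet ↔ ↑e ∈ K'.edgeSet) ∧ (↑e ∈ L ↔ ↑e ∈ L') := by
    intro e
    have h0 := hmem (inr (e, 0))
    have h1 := hmem (inr (e, 1))
    have := @hL e
    have := @hL' e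
    simp only [inr_mem_expansionVerts, ne_eq, not_true_eq_false, one_ne_zero,
      not_false_eq_true, iff_true, iff_false] at h0 h1
    tauto
  have hE : K.edgeSet = K'.edgeSet := Set.ext fun q => by
    constructor
    · exact fun hq => (hedge ⟨q, K.edgeSet_subset hq⟩).1.1 hq
    · exact fun hq => (hedge ⟨q, K'.edgeSet_subset hq⟩).1.2 hq
  refine ⟨SimpleGraph.Subgraph.ext (Set.ext fun a => hmem (inl a)) ?_, Set.ext fun q => ?_⟩
  · ext a b
    rw [← SimpleGraph.Subgraph.mem_edgeSet, hE, SimpleGraph.Subgraph.mem_edgeSet]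
  · constructor
    · exact fun hq => (hedge ⟨q, K.edgeSet_subset (hL hq)⟩).2.1 hq
    · exact fun hq => (hedge ⟨q, K'.edgeSet_subset (hL' hq)⟩).2.2 hq

variable (f : G.edgeSet → V × V) {a b : V} (h : G.Adj a b)

theorem inr_longPath_mem_expansionVerts (hK : s(a, b) ∈ K.edgeSet) (hL : s(a, b) ∈ L) :
    inr (longPathFst f h) ∈ expansionVerts K L ∧
      inr (longPathSnd f h) ∈ expansionVerts K L := by
  unfold longPathFst longPathSnd
  split_ifs <;> simp [hK, hL]

theorem inr_shortPathMid_mem_expansionVerts (hK : s(a, b) ∈ K.edgeSet) (hL : s(a, b) ∉ L) :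
    inr (shortPathMid h) ∈ expansionVerts K L := by
  simp [shortPathMid, hK, hL]

end Expansion

section Words

variable {V : Type*} {G : SimpleGraph V} (f : G.edgeSet → V × V)
open SimpleGraph

noncomputable def triangleWord (v : ZMod 3 → V) (hv : ∀ i, G.Adj (v i) (v (i + 1))) :
    ZMod 9 → V ⊕ (G.edgeSet × Fin 3) :=
  ![inl (v 0), inr (longPathFst f (hv 0)), inr (longPathSnd f (hv 0)),
    inl (v 1), inr (longPathFst f (hv 1)), inr (longPathSnd f (hv 1)),
    inl (v 2), inr (longPathFst f (hv 2)), inr (longPathSnd f (hv 2))]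

noncomputable def squareWord (v : ZMod 4 → V) (hv : ∀ i, G.Adj (v i) (v (i + 1))) :
    ZMod 9 → V ⊕ (G.edgeSet × Fin 3) :=
  ![inl (v 0), inr (longPathFst f (hv 0)), inr (longPathSnd f (hv 0)),
    inl (v 1), inr (shortPathMid (hv 1)), inl (v 2), inr (shortPathMid (hv 2)),
    inl (v 3), inr (shortPathMid (hv 3))]

variable {f}

theorem triangleWord_injective {v : ZMod 3 → V} (hvinj : Injective v)
    (hv : ∀ i, G.Adj (v i) (v (i + 1))) : Injective (triangleWord f v hv) := by
  have hE := injective_sym2_mk_add_one (by norm_num) hvinj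
  intro i j h
  fin_cases i <;> fin_cases j <;> first
    | rfl
    | (simp [triangleWord] at h; done)
    | (refine absurd (Sum.inl_injective h) (hvinj.ne ?_); decide)
    | (refine absurd (congrArg (fun x => (x.1 : Sym2 V)) (Sum.inr_injective h)) (hE.ne ?_); decide)
    | exact absurd (Sum.inr_injective h) (longPathFst_ne_longPathSnd f _)
    | exact absurd (Sum.inr_injective h).symm (longPathFst_ne_longPathSnd f _)

theorem squareWord_injective {v : ZMod 4 → V} (hvinj : Injective v)
    (hv : ∀ i, G.Adj (v i) (v (i + 1))) : Injective (squareWord f v hv) := by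
  have hE := injective_sym2_mk_add_one (by norm_num) hvinj
  intro i j h
  fin_cases i <;> fin_cases j <;> first
    | rfl
    | (simp [squareWord] at h; done)
    | (refine absurd (Sum.inl_injective h) (hvinj.ne ?_); decide)
    | (refine absurd (congrArg (fun x => (x.1 : Sym2 V)) (Sum.inr_injective h)) (hE.ne ?_); decide)
    | exact absurd (Sum.inr_injective h) (longPathFst_ne_longPathSnd f _)
    | exact absurd (Sum.inr_injective h).symm (longPathFst_ne_longPathSnd f _)

theorem range_triangleWord (v : ZMod 3 → V) (hv : ∀ i, G.Adj (v i) (v (i + 1))) :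
    Set.range (triangleWord f v hv) =
      expansionVerts (cycleSubgraph v hv) (cycleSubgraph v hv).edgeSet := by
  have hE : ∀ i, s(v i, v (i + 1)) ∈ (cycleSubgraph v hv).edgeSet :=
    fun i => mem_cycleSubgraph_edgeSet.2 ⟨i, rfl⟩
  have hlong := fun i => inr_longPath_mem_expansionVerts f (hv i) (hE i) (hE i)
  apply Set.Subset.antisymm
  · rintro _ ⟨j, rfl⟩
    fin_cases j
    exacts [⟨0, rfl⟩, (hlong 0).1, (hlong 0).2, ⟨1, rfl⟩, (hlong 1).1, (hlong 1).2,
      ⟨2, rfl⟩, (hlong 2).1, (hlong 2).2]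
  · rintro (a | ⟨e, t⟩) hx
    · obtain ⟨i, rfl⟩ := inl_mem_expansionVerts.1 hx
      fin_cases i
      exacts [⟨0, rfl⟩, ⟨3, rfl⟩, ⟨6, rfl⟩]
    · obtain ⟨he, ht⟩ := inr_mem_expansionVerts.1 hx
      obtain ⟨i, hi⟩ := mem_cycleSubgraph_edgeSet.1 he
      obtain rfl : e = ⟨_, hv i⟩ := Subtype.ext hi
      rcases eq_longPathFst_or_eq_longPathSnd f (hv i) (ht.1 he) with h | h <;> rw [h] <;>
        fin_cases i
      exacts [⟨1, rfl⟩, ⟨4, rfl⟩, ⟨7, rfl⟩, ⟨2, rfl⟩, ⟨5, rfl⟩, ⟨8, rfl⟩]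

theorem range_squareWord {v : ZMod 4 → V} (hvinj : Injective v)
    (hv : ∀ i, G.Adj (v i) (v (i + 1))) :
    Set.range (squareWord f v hv) = expansionVerts (cycleSubgraph v hv) {s(v 0, v 1)} := by
  have hE : ∀ i, s(v i, v (i + 1)) ∈ (cycleSubgraph v hv).edgeSet :=
    fun i => mem_cycleSubgraph_edgeSet.2 ⟨i, rfl⟩
  have hne : ∀ i ≠ 0, s(v i, v (i + 1)) ∉ ({s(v 0, v 1)} : Set (Sym2 V)) :=
    fun i hi => (injective_sym2_mk_add_one (by norm_num) hvinj).ne hi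
  have hlong := inr_longPath_mem_expansionVerts f (hv 0) (hE 0) rfl
  have hshort := fun i hi => inr_shortPathMid_mem_expansionVerts (hv i) (hE i) (hne i hi)
  apply Set.Subset.antisymm
  · rintro _ ⟨j, rfl⟩
    fin_cases j
    exacts [⟨0, rfl⟩, hlong.1, hlong.2, ⟨1, rfl⟩, hshort 1 (by decide), ⟨2, rfl⟩,
      hshort 2 (by decide), ⟨3, rfl⟩, hshort 3 (by decide)]
  · rintro (a | ⟨e, t⟩) hx
    · obtain ⟨i, rfl⟩ := inl_mem_expansionVerts.1 hx
      fin_cases i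
      exacts [⟨0, rfl⟩, ⟨3, rfl⟩, ⟨5, rfl⟩, ⟨7, rfl⟩]
    · obtain ⟨he, ht⟩ := inr_mem_expansionVerts.1 hx
      obtain ⟨i, hi⟩ := mem_cycleSubgraph_edgeSet.1 he
      obtain rfl : e = ⟨_, hv i⟩ := Subtype.ext hi
      by_cases hi0 : i = 0
      · subst hi0
        rcases eq_longPathFst_or_eq_longPathSnd f (hv 0) (ht.1 rfl) with h | h <;> rw [h]
        exacts [⟨1, rfl⟩, ⟨2, rfl⟩]
      · obtain rfl : t = 0 := not_not.1 (mt ht.2 (hne i hi0))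
        fin_cases i
        exacts [absurd rfl hi0, ⟨4, rfl⟩, ⟨6, rfl⟩, ⟨8, rfl⟩]

variable (hf : ∀ e : G.edgeSet, (e : Sym2 V) = s((f e).1, (f e).2))
include hf

theorem triangleWord_adj (v : ZMod 3 → V) (hv : ∀ i, G.Adj (v i) (v (i + 1))) (j : ZMod 9) :
    (oddExpandedGraph G f).Adj (triangleWord f v hv j) (triangleWord f v hv (j + 1)) := by
  have h0 := oddExpandedGraph_adj_longPath hf (hv 0)
  have h1 := oddExpandedGraph_adj_longPath hf (hv 1)
  have h2 := oddExpandedGraph_adj_longPath hf (hv 2)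
  fin_cases j
  exacts [h0.1, h0.2.1, h0.2.2, h1.1, h1.2.1, h1.2.2, h2.1, h2.2.1, h2.2.2]

theorem squareWord_adj (v : ZMod 4 → V) (hv : ∀ i, G.Adj (v i) (v (i + 1))) (j : ZMod 9) :
    (oddExpandedGraph G f).Adj (squareWord f v hv j) (squareWord f v hv (j + 1)) := by
  have h0 := oddExpandedGraph_adj_longPath hf (hv 0)
  have h1 := oddExpandedGraph_adj_shortPath hf (hv 1)
  have h2 := oddExpandedGraph_adj_shortPath hf (hv 2)
  have h3 := oddExpandedGraph_adj_shortPath hf (hv 3)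
  fin_cases j
  exacts [h0.1, h0.2.1, h0.2.2, h1.1, h1.2, h2.1, h2.2, h3.1, h3.2]

end Words

section ClosedWalks

variable {V : Type*} {G : SimpleGraph V} {f : G.edgeSet → V × V}
  (hf : ∀ e : G.edgeSet, (e : Sym2 V) = s((f e).1, (f e).2))
  {n : ℕ} {w : ZMod n → V ⊕ (G.edgeSet × Fin 3)}
  (hw : ∀ i, (oddExpandedGraph G f).Adj (w i) (w (i + 1)))
include hf hw

theorem exists_eq_longPath_of_isLeft {p : ZMod n} {a b : V} (ha : w p = inl a)
    (hb : w (p + 3) = inl b) (h1 : (w (p + 1)).isLeft = false)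
    (h2 : (w (p + 2)).isLeft = false) :
    ∃ h : G.Adj a b, w (p + 1) = inr (longPathFst f h) ∧ w (p + 2) = inr (longPathSnd f h) := by
  obtain ⟨x, hx⟩ := Sum.isRight_iff.1 (Sum.isLeft_eq_false.1 h1)
  obtain ⟨y, hy⟩ := Sum.isRight_iff.1 (Sum.isLeft_eq_false.1 h2)
  have h01 := hw p
  have h12 := hw (p + 1)
  have h23 := hw (p + 2)
  rw [ha, hx] at h01
  rw [add_assoc, one_add_one_eq_two, hx, hy] at h12
  rw [add_assoc, two_add_one_eq_three, hy, hb] at h23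
  obtain ⟨h, rfl, rfl⟩ := exists_eq_longPath hf h01 h12 h23
  exact ⟨h, hx, hy⟩

theorem exists_eq_shortPath_of_isLeft {p : ZMod n} {a b : V} (hab : a ≠ b) (ha : w p = inl a)
    (hb : w (p + 2) = inl b) (h1 : (w (p + 1)).isLeft = false) :
    ∃ h : G.Adj a b, w (p + 1) = inr (shortPathMid h) := by
  obtain ⟨x, hx⟩ := Sum.isRight_iff.1 (Sum.isLeft_eq_false.1 h1)
  have h01 := hw p
  have h12 := hw (p + 1)
  rw [ha, hx] at h01
  rw [add_assoc, one_add_one_eq_two, hx, hb] at h12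
  obtain ⟨h, rfl⟩ := exists_eq_shortPath hf hab h01 h12
  exact ⟨h, hx⟩

end ClosedWalks

section NineCycles

variable {V : Type*} {G : SimpleGraph V} {f : G.edgeSet → V × V}
open SimpleGraph

theorem oddExpandedGraph_cycle_eq_induce {n : ℕ} (hn : 2 < n)
    {H : (oddExpandedGraph G f).Subgraph} (φ : H.coe ≃g cycleGraphZMod n) :
    H = (⊤ : (oddExpandedGraph G f).Subgraph).induce H.verts := by
  obtain ⟨w, hw, hinj, rfl⟩ := H.exists_eq_cycleSubgraph (by omega) φ
  exact cycleSubgraph_eq_induce hn hinj fun _ _ => oddExpandedGraph_encard_neighborSet_le_two_of_adj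

theorem oddExpandedGraph_nonempty_iso_induce_range {n : ℕ} (hn : 2 < n)
    {w : ZMod n → V ⊕ (G.edgeSet × Fin 3)}
    (hw : ∀ i, (oddExpandedGraph G f).Adj (w i) (w (i + 1))) (hinj : Injective w) :
    Nonempty (((⊤ : (oddExpandedGraph G f).Subgraph).induce (Set.range w)).coe ≃g
      cycleGraphZMod n) := by
  rw [← cycleSubgraph_eq_induce (hw := hw) hn hinj
    fun _ _ => oddExpandedGraph_encard_neighborSet_le_two_of_adj]
  exact nonempty_iso_cycleSubgraph (by omega) hinj

variable (hf : ∀ e : G.edgeSet, (e : Sym2 V) = s((f e).1, (f e).2))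
include hf

theorem exists_eq_triangleWord {w : ZMod 9 → V ⊕ (G.edgeSet × Fin 3)}
    (hw : ∀ i, (oddExpandedGraph G f).Adj (w i) (w (i + 1))) (hinj : Injective w)
    (hpat : ∀ t, (w t).isLeft = decide (t = 0 ∨ t = 3 ∨ t = 6)) :
    ∃ (v : ZMod 3 → V) (hv : ∀ i, G.Adj (v i) (v (i + 1))),
      Injective v ∧ w = triangleWord f v hv := by
  obtain ⟨a, ha⟩ := Sum.isLeft_iff.1 (by rw [hpat]; decide : (w 0).isLeft)
  obtain ⟨b, hb⟩ := Sum.isLeft_iff.1 (by rw [hpat]; decide : (w 3).isLeft)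
  obtain ⟨c, hc⟩ := Sum.isLeft_iff.1 (by rw [hpat]; decide : (w 6).isLeft)
  obtain ⟨hab, h1, h2⟩ :=
    exists_eq_longPath_of_isLeft hf hw (p := 0) ha hb (by rw [hpat]; decide) (by rw [hpat]; decide)
  obtain ⟨hbc, h4, h5⟩ :=
    exists_eq_longPath_of_isLeft hf hw (p := 3) hb hc (by rw [hpat]; decide) (by rw [hpat]; decide)
  obtain ⟨hca, h7, h8⟩ :=
    exists_eq_longPath_of_isLeft hf hw (p := 6) hc ha (by rw [hpat]; decide) (by rw [hpat]; decide)
  have hv : ∀ i, G.Adj (![a, b, c] i) (![a, b, c] (i + 1)) := by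
    intro i
    fin_cases i
    exacts [hab, hbc, hca]
  have hpos : ∀ i, w (![0, 3, 6] i) = inl (![a, b, c] i) := by
    intro i
    fin_cases i
    exacts [ha, hb, hc]
  refine ⟨_, hv, fun i j hij => ?_, ?_⟩
  · have hpos_inj : Injective (![0, 3, 6] : ZMod 3 → ZMod 9) := by decide
    exact hpos_inj (hinj ((hpos i).trans ((congrArg inl hij).trans (hpos j).symm)))
  · funext j
    fin_cases j
    exacts [ha, h1, h2, hb, h4, h5, hc, h7, h8]

theorem exists_eq_squareWord {w : ZMod 9 → V ⊕ (G.edgeSet × Fin 3)}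
    (hw : ∀ i, (oddExpandedGraph G f).Adj (w i) (w (i + 1))) (hinj : Injective w)
    (hpat : ∀ t, (w t).isLeft = decide (t = 0 ∨ t = 3 ∨ t = 5 ∨ t = 7)) :
    ∃ (v : ZMod 4 → V) (hv : ∀ i, G.Adj (v i) (v (i + 1))),
      Injective v ∧ w = squareWord f v hv := by
  have hne {i j : ZMod 9} {x y : V} (hi : w i = inl x) (hj : w j = inl y) (hij : i ≠ j) :
      x ≠ y := fun hxy => hij (hinj (hi.trans (hxy ▸ hj.symm)))
  obtain ⟨a, ha⟩ := Sum.isLeft_iff.1 (by rw [hpat]; decide : (w 0).isLeft)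
  obtain ⟨b, hb⟩ := Sum.isLeft_iff.1 (by rw [hpat]; decide : (w 3).isLeft)
  obtain ⟨c, hc⟩ := Sum.isLeft_iff.1 (by rw [hpat]; decide : (w 5).isLeft)
  obtain ⟨d, hd⟩ := Sum.isLeft_iff.1 (by rw [hpat]; decide : (w 7).isLeft)
  obtain ⟨hab, h1, h2⟩ :=
    exists_eq_longPath_of_isLeft hf hw (p := 0) ha hb (by rw [hpat]; decide) (by rw [hpat]; decide)
  obtain ⟨hbc, h4⟩ := exists_eq_shortPath_of_isLeft hf hw (p := 3) (hne hb hc (by decide)) hb hc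
    (by rw [hpat]; decide)
  obtain ⟨hcd, h6⟩ := exists_eq_shortPath_of_isLeft hf hw (p := 5) (hne hc hd (by decide)) hc hd
    (by rw [hpat]; decide)
  obtain ⟨hda, h8⟩ := exists_eq_shortPath_of_isLeft hf hw (p := 7) (hne hd ha (by decide)) hd ha
    (by rw [hpat]; decide)
  have hv : ∀ i, G.Adj (![a, b, c, d] i) (![a, b, c, d] (i + 1)) := by
    intro i
    fin_cases i
    exacts [hab, hbc, hcd, hda]
  have hpos : ∀ i, w (![0, 3, 5, 7] i) = inl (![a, b, c, d] i) := by
    intro i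
    fin_cases i
    exacts [ha, hb, hc, hd]
  refine ⟨_, hv, fun i j hij => ?_, ?_⟩
  · have hpos_inj : Injective (![0, 3, 5, 7] : ZMod 4 → ZMod 9) := by decide
    exact hpos_inj (hinj ((hpos i).trans ((congrArg inl hij).trans (hpos j).symm)))
  · funext j
    fin_cases j
    exacts [ha, h1, h2, hb, h4, hc, h6, hd, h8]

theorem oddExpandedGraph_nineCycle_verts_eq {H : (oddExpandedGraph G f).Subgraph}
    (φ : H.coe ≃g cycleGraphZMod 9) :
    (∃ (v : ZMod 3 → V) (hv : ∀ i, G.Adj (v i) (v (i + 1))), Injective v ∧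
      H.verts = expansionVerts (cycleSubgraph v hv) (cycleSubgraph v hv).edgeSet) ∨
    (∃ (v : ZMod 4 → V) (hv : ∀ i, G.Adj (v i) (v (i + 1))), Injective v ∧
      H.verts = expansionVerts (cycleSubgraph v hv) {s(v 0, v 1)}) := by
  obtain ⟨w, hw, hinj, rfl⟩ := H.exists_eq_cycleSubgraph (by norm_num) φ
  have hnot_inl_inl : ∀ i, (w i).isLeft = true → (w (i + 1)).isLeft = false := by
    intro i hi
    obtain ⟨a, ha⟩ := Sum.isLeft_iff.1 hi
    have hadj := hw i
    rcases hb : w (i + 1) with b | y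
    · rw [ha, hb] at hadj
      exact absurd hadj (oddExpandedGraph_not_adj_inl_inl a b)
    · rfl
  have hinl_of_three : ∀ i, (w i).isLeft = true ∨ (w (i + 1)).isLeft = true ∨
      (w (i + 2)).isLeft = true := by
    intro i
    by_contra! h
    obtain ⟨x, hx⟩ := Sum.isRight_iff.1 (Sum.not_isLeft.1 h.1)
    obtain ⟨y, hy⟩ := Sum.isRight_iff.1 (Sum.not_isLeft.1 h.2.1)
    obtain ⟨z, hz⟩ := Sum.isRight_iff.1 (Sum.not_isLeft.1 h.2.2)
    have hxy := hw i
    have hyz := hw (i + 1)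
    rw [hx, hy] at hxy
    rw [add_assoc, one_add_one_eq_two, hy, hz] at hyz
    have hiz : w i = w (i + 2) := by rw [hx, hz, oddExpandedGraph_eq_of_adj_inr_of_adj_inr hxy hyz]
    exact (by decide : ∀ i : ZMod 9, i ≠ i + 2) i (hinj hiz)
  obtain ⟨j, hpat | hpat⟩ :=
    ZMod.nine_exists_shift_of_gaps_two_or_three _ hnot_inl_inl hinl_of_three
  all_goals
    have hw' : ∀ t, (oddExpandedGraph G f).Adj (w (j + t)) (w (j + (t + 1))) :=
      fun t => add_assoc j t 1 ▸ hw (j + t)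
    have hinj' : Injective fun t => w (j + t) := hinj.comp (add_right_injective j)
    have hrange : Set.range w = Set.range fun t => w (j + t) :=
      ((add_left_surjective j).range_comp w).symm
  · obtain ⟨v, hv, hvinj, hveq⟩ := exists_eq_triangleWord hf hw' hinj' hpat
    exact Or.inl ⟨v, hv, hvinj, by rw [cycleSubgraph_verts, hrange, hveq, range_triangleWord]⟩
  · obtain ⟨v, hv, hvinj, hveq⟩ := exists_eq_squareWord hf hw' hinj' hpat
    exact Or.inr ⟨v, hv, hvinj,
      by rw [cycleSubgraph_verts, hrange, hveq, range_squareWord hvinj]⟩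

theorem nonempty_iso_induce_expansionVerts_of_triangle {K : G.Subgraph}
    (φ : K.coe ≃g cycleGraphZMod 3) :
    Nonempty (((⊤ : (oddExpandedGraph G f).Subgraph).induce
      (expansionVerts K K.edgeSet)).coe ≃g cycleGraphZMod 9) := by
  obtain ⟨v, hv, hvinj, rfl⟩ := K.exists_eq_cycleSubgraph (by norm_num) φ
  rw [← range_triangleWord (f := f)]
  exact oddExpandedGraph_nonempty_iso_induce_range (by norm_num) (triangleWord_adj hf v hv)
    (triangleWord_injective hvinj hv)

theorem nonempty_iso_induce_expansionVerts_of_square {K : G.Subgraph}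
    (φ : K.coe ≃g cycleGraphZMod 4) {m : Sym2 V} (hm : m ∈ K.edgeSet) :
    Nonempty (((⊤ : (oddExpandedGraph G f).Subgraph).induce
      (expansionVerts K {m})).coe ≃g cycleGraphZMod 9) := by
  obtain ⟨v, hv, hvinj, rfl⟩ := K.exists_eq_cycleSubgraph (by norm_num) φ
  obtain ⟨k, rfl⟩ := mem_cycleSubgraph_edgeSet.1 hm
  have hvinj' : Injective fun i => v (k + i) := hvinj.comp (add_right_injective k)
  have hrange := range_squareWord (f := f) hvinj' fun i => add_assoc k i 1 ▸ hv (k + i)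
  rw [add_zero, cycleSubgraph_rotate (hw := hv)] at hrange
  rw [← hrange]
  exact oddExpandedGraph_nonempty_iso_induce_range (by norm_num) (squareWord_adj hf _ _)
    (squareWord_injective hvinj' _)

def nineCycleOfShortCycle :
    {K : G.Subgraph // Nonempty (K.coe ≃g cycleGraphZMod 3)} ⊕
      (Σ K : {K : G.Subgraph // Nonempty (K.coe ≃g cycleGraphZMod 4)}, K.1.edgeSet) →
    {H : (oddExpandedGraph G f).Subgraph // Nonempty (H.coe ≃g cycleGraphZMod 9)}
  | inl K => ⟨_, nonempty_iso_induce_expansionVerts_of_triangle hf K.2.some⟩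
  | inr ⟨K, m⟩ => ⟨_, nonempty_iso_induce_expansionVerts_of_square hf K.2.some m.2⟩

theorem nineCycleOfShortCycle_injective : Injective (nineCycleOfShortCycle hf) := by
  have hne {K : G.Subgraph} (h3 : Nonempty (K.coe ≃g cycleGraphZMod 3))
      (h4 : Nonempty (K.coe ≃g cycleGraphZMod 4)) : False := by
    have := Nat.card_congr (h3.some.symm.toEquiv.trans h4.some.toEquiv)
    simp at this
  rintro (⟨K, hK⟩ | ⟨⟨K, hK⟩, m, hm⟩) (⟨K', hK'⟩ | ⟨⟨K', hK'⟩, m', hm'⟩) h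
  all_goals have hS := congrArg (fun H => H.1.verts) h
  · obtain ⟨rfl, -⟩ := eq_of_expansionVerts_eq subset_rfl subset_rfl hS
    rfl
  · obtain ⟨rfl, -⟩ := eq_of_expansionVerts_eq subset_rfl (Set.singleton_subset_iff.2 hm') hS
    exact (hne hK hK').elim
  · obtain ⟨rfl, -⟩ := eq_of_expansionVerts_eq (Set.singleton_subset_iff.2 hm) subset_rfl hS
    exact (hne hK' hK).elim
  · obtain ⟨rfl, hmm'⟩ := eq_of_expansionVerts_eq (Set.singleton_subset_iff.2 hm)
      (Set.singleton_subset_iff.2 hm') hS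
    obtain rfl := Set.singleton_eq_singleton_iff.1 hmm'
    rfl

theorem nineCycleOfShortCycle_surjective : Surjective (nineCycleOfShortCycle hf) := by
  rintro ⟨H, ⟨φ⟩⟩
  have hH := oddExpandedGraph_cycle_eq_induce (by norm_num) φ
  rcases oddExpandedGraph_nineCycle_verts_eq hf φ with
    ⟨v, hv, hvinj, hverts⟩ | ⟨v, hv, hvinj, hverts⟩
  · refine ⟨inl ⟨cycleSubgraph v hv, nonempty_iso_cycleSubgraph (by norm_num) hvinj⟩, ?_⟩
    exact Subtype.ext (hverts ▸ hH).symm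
  · refine ⟨inr ⟨⟨cycleSubgraph v hv, nonempty_iso_cycleSubgraph (by norm_num) hvinj⟩,
      s(v 0, v 1), (mem_cycleSubgraph_edgeSet (hw := hv)).2 ⟨0, rfl⟩⟩, ?_⟩
    exact Subtype.ext (hverts ▸ hH).symm

end NineCycles

/-- The number of `9`-cycle subgraphs of the odd expanded graph `G''` equals
the number of `3`-cycle subgraphs of `G` plus `4` times the number of
`4`-cycle subgraphs of `G`. -/
theorem oddExpanded_nineCycles {V : Type*} [Fintype V] (G : SimpleGraph V)
    (f : G.edgeSet → V × V)
    (hf : ∀ e : G.edgeSet, (e : Sym2 V) = s((f e).1, (f e).2)) :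
    cycleCount (oddExpandedGraph G f) 9 = cycleCount G 3 + 4 * cycleCount G 4 := by
  have hsquares : Nat.card (Σ K : {K : G.Subgraph // Nonempty (K.coe ≃g cycleGraphZMod 4)},
      K.1.edgeSet) = 4 * cycleCount G 4 := by
    have := Fintype.ofFinite {K : G.Subgraph // Nonempty (K.coe ≃g cycleGraphZMod 4)}
    rw [Nat.card_sigma, Finset.sum_const_nat fun K _ =>
      K.1.natCard_edgeSet_of_iso (by norm_num) K.2.some, Finset.card_univ, mul_comm, cycleCount,
      Nat.card_eq_fintype_card]
  rw [cycleCount, cycleCount, ← hsquares, ← Nat.card_sum]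
  exact (Nat.card_congr (Equiv.ofBijective _ ⟨nineCycleOfShortCycle_injective hf,
    nineCycleOfShortCycle_surjective hf⟩)).symm
end

section
/- Let (V, R) be a finite nonempty DAG having a source s such that every intersection vertex of (V, R) lies in Reach(s). Then (V, R) admits a DAG-tree decomposition of width 1. -/
/-- A source of a digraph `(V, R)`: a vertex with no `R`-predecessor. -/
def DagSource {V : Type*} (R : V → V → Prop) (s : V) : Prop := ∀ v, ¬ R v s

/-- The set of vertices reachable (under the reflexive-transitive closure of
`R`) from some vertex of `B`. -/
def DagReach {V : Type*} (R : V → V → Prop) (B : Set V) : Set V :=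
  {x | ∃ s ∈ B, Relation.ReflTransGen R s x}

/-- `(V, R)` admits a DAG-tree decomposition of width 1: a finite tree `T`
with a bag of sources at each node, such that every source lies in some bag,
the reachability condition holds along paths of `T`, and every bag has at most
one element. -/
def HasWidth1DTD {V : Type*} (R : V → V → Prop) : Prop :=
  ∃ (ι : Type) (T : SimpleGraph ι) (bag : ι → Set V),
    Finite ι ∧ T.IsTree ∧
    (∀ i, ∀ s ∈ bag i, DagSource R s) ∧
    (∀ s, DagSource R s → ∃ i, s ∈ bag i) ∧
    (∀ (b b1 b2 : ι) (p : T.Path b1 b2), b ∈ p.val.support →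
      DagReach R (bag b1) ∩ DagReach R (bag b2) ⊆ DagReach R (bag b)) ∧
    (∀ i, (bag i).ncard ≤ 1)

/-- An intersection vertex: one reachable from two distinct sources. -/
def DagIntersectionVertex {V : Type*} (R : V → V → Prop) (x : V) : Prop :=
  ∃ s1 s2, s1 ≠ s2 ∧ DagSource R s1 ∧ DagSource R s2 ∧
    Relation.ReflTransGen R s1 x ∧ Relation.ReflTransGen R s2 x

/-
Take the star whose center carries the bag `{s}` and whose leaves carry one singleton bag per
source. A path in a star visits only its endpoints and the center, so the only nontrivial
condition is that the reaches of two distinct leaf sources meet inside `Reach(s)`; their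
common vertices are intersection vertices, which lie in `Reach(s)` by hypothesis.
-/

namespace SimpleGraph

variable {ι : Type*}

lemma eq_center_of_starGraph_adj_of_adj {r x y z : ι} (hy : (starGraph r).Adj x y)
    (hz : (starGraph r).Adj x z) (hyz : y ≠ z) : x = r := by
  by_contra hx
  simp only [starGraph_adj, hx, false_or] at hy hz
  exact hyz (hy.2.trans hz.2.symm)

lemma Walk.IsPath.mem_support_starGraph {r u v b : ι} {p : (starGraph r).Walk u v}
    (hp : p.IsPath) (hb : b ∈ p.support) : b = u ∨ b = v ∨ b = r := by
  obtain ⟨i, rfl, hi⟩ := Walk.mem_support_iff_exists_getVert.mp hb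
  rcases Nat.eq_zero_or_pos i with rfl | hi0
  · exact Or.inl p.getVert_zero
  rcases hi.eq_or_lt with rfl | hilt
  · exact Or.inr (Or.inl p.getVert_length)
  -- an interior vertex of a path has two distinct neighbours, which forces it to be the center
  have hprev : (starGraph r).Adj (p.getVert i) (p.getVert (i - 1)) := by
    simpa [Nat.sub_add_cancel hi0] using (p.adj_getVert_succ (i := i - 1) (by omega)).symm
  have hne : p.getVert (i - 1) ≠ p.getVert (i + 1) := fun h ↦ by
    have := hp.getVert_injOn (by simp only [Set.mem_ofPred_eq]; omega)
      (by simp only [Set.mem_ofPred_eq]; omega) h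
    omega
  exact Or.inr (Or.inr (eq_center_of_starGraph_adj_of_adj hprev (p.adj_getVert_succ hilt) hne))

end SimpleGraph

open SimpleGraph

section

variable {V : Type*} (R : V → V → Prop)

lemma dagReach_singleton (x : V) : DagReach R {x} = {y | Relation.ReflTransGen R x y} := by
  simp [DagReach]

theorem hasWidth1DTD_of_starGraph {ι : Type} [Finite ι] (c : ι) (f : ι → V)
    (hsource : ∀ i, DagSource R (f i)) (hcover : ∀ t, DagSource R t → ∃ i, f i = t)
    (hinter : ∀ i j, i ≠ j → DagReach R {f i} ∩ DagReach R {f j} ⊆ DagReach R {f c}) :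
    HasWidth1DTD R := by
  refine ⟨ι, starGraph c, fun i ↦ {f i}, ‹_›, isTree_starGraph c, ?_, ?_, ?_, ?_⟩
  · rintro i t rfl
    exact hsource i
  · intro t ht
    obtain ⟨i, rfl⟩ := hcover t ht
    exact ⟨i, rfl⟩
  · intro b b1 b2 p hb
    obtain rfl | hne := eq_or_ne b1 b2
    · rw [Path.loop_eq p] at hb
      rw [List.mem_singleton.mp hb, Set.inter_self]
    rcases p.property.mem_support_starGraph hb with rfl | rfl | rfl
    · exact Set.inter_subset_left
    · exact Set.inter_subset_right
    · exact hinter b1 b2 hne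
  · intro i
    rw [Set.ncard_singleton]

end

theorem hasWidth1DTD_of_source_reaching_intersections_general {V : Type*} [Finite V]
    (R : V → V → Prop)
    (s : V) (hs : DagSource R s)
    (hint : ∀ x, DagIntersectionVertex R x → Relation.ReflTransGen R s x) :
    HasWidth1DTD R := by
  let e := Finite.equivFin {t // DagSource R t}
  let f : Option (Fin (Nat.card {t // DagSource R t})) → V :=
    Option.elim' s fun i ↦ (e.symm i : V)
  refine hasWidth1DTD_of_starGraph R none f ?_ ?_ ?_
  · rintro (_ | i)
    exacts [hs, (e.symm i).property]
  · intro t ht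
    exact ⟨some (e ⟨t, ht⟩), by simp [f]⟩
  · rintro (_ | i) (_ | j) hij
    · exact absurd rfl hij
    · exact Set.inter_subset_left
    · exact Set.inter_subset_right
    · have hne : (e.symm i : V) ≠ e.symm j :=
        Subtype.val_injective.ne (e.symm.injective.ne (hij <| congrArg some ·))
      simp only [f, Option.elim', dagReach_singleton]
      rintro x ⟨hx₁, hx₂⟩
      exact hint x ⟨_, _, hne, (e.symm i).property, (e.symm j).property, hx₁, hx₂⟩

/-- If a finite nonempty DAG has a source `s` such that every intersection
vertex is reachable from `s`, then it admits a DAG-tree decomposition of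
width 1. -/
theorem hasWidth1DTD_of_source_reaching_intersections {V : Type*} [Finite V] [Nonempty V]
    (R : V → V → Prop) (hR : Irreflexive (Relation.TransGen R))
    (s : V) (hs : DagSource R s)
    (hint : ∀ x, DagIntersectionVertex R x → Relation.ReflTransGen R s x) :
    HasWidth1DTD R :=
  hasWidth1DTD_of_source_reaching_intersections_general R s hs hint
end

section
/- Let (V, R) be a finite DAG with k ≥ 1 vertices having a unique source s, such that every vertex of V is reachable from s. Let (W, A) be a finite directed graph with n vertices in which every vertex has at most d out-neighbors. Then the number of homomorphisms from (V, R) to (W, A) is at most n · d^(k−1). -/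
/-- Let `(V, R)` be a finite DAG with a unique source `s` from which every
vertex is reachable, and let `(W, A)` be a finite digraph in which every vertex
has at most `d` out-neighbors. Then the number of homomorphisms from `(V, R)`
to `(W, A)` is at most `n · d^(k-1)`, where `k = |V|` and `n = |W|`. -/
theorem hom_count_le_of_unique_source {V W : Type*} [Fintype V] [Fintype W]
    (R : V → V → Prop) (hR : Irreflexive (Relation.TransGen R))
    (s : V) (hs : DagSource R s) (huniq : ∀ t, DagSource R t → t = s)
    (hreach : ∀ v, Relation.ReflTransGen R s v)
    (A : W → W → Prop) (d : ℕ)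
    (hd : ∀ w : W, {x | A w x}.ncard ≤ d) :
    Nat.card {φ : V → W // ∀ u v, R u v → A (φ u) (φ v)} ≤
      Fintype.card W * d ^ (Fintype.card V - 1) := by
  classical
  -- every non-source vertex has a predecessor
  have hpred : ∀ v : V, v ≠ s → ∃ u, R u v := by
    intro v hv
    by_contra h
    push_neg at h
    exact hv (huniq v h)
  choose p hp using hpred
  -- embeddings of out-neighborhoods into `Fin d`
  have hι : ∀ w : W, Nonempty ({x // A w x} ↪ Fin d) := by
    intro w
    apply Function.Embedding.nonempty_of_card_le
    have h1 : Fintype.card {x // A w x} ≤ d := by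
      rw [← Nat.card_eq_fintype_card]
      rw [show {x // A w x} = ↥{x | A w x} from rfl, Nat.card_coe_set_eq]
      exact hd w
    simpa using h1
  set ι : ∀ w : W, {x // A w x} ↪ Fin d := fun w => (hι w).some with hιdef
  have key : ∀ (w w' : W), w = w' → ∀ (x y : W) (hx : A w x) (hy : A w' y),
      ι w ⟨x, hx⟩ = ι w' ⟨y, hy⟩ → x = y := by
    rintro w w' rfl x y hx hy hxy
    exact congrArg Subtype.val ((ι w).injective hxy)
  -- the encoding map
  set F : {φ : V → W // ∀ u v, R u v → A (φ u) (φ v)} →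
      W × ({v : V // v ≠ s} → Fin d) :=
    fun φ => (φ.1 s, fun v => ι (φ.1 (p v.1 v.2)) ⟨φ.1 v.1, φ.2 _ _ (hp v.1 v.2)⟩)
    with hFdef
  have hwf : WellFounded (Relation.TransGen R) := by
    have h1 : IsIrrefl V (Relation.TransGen R) := ⟨hR⟩
    have h2 : IsTrans V (Relation.TransGen R) := ⟨fun _ _ _ => Relation.TransGen.trans⟩
    exact Finite.wellFounded_of_trans_of_irrefl _
  have hinj : Function.Injective F := by
    intro φ ψ h
    have h1 : φ.1 s = ψ.1 s := congrArg Prod.fst h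
    have h2 := congrArg Prod.snd h
    apply Subtype.ext
    funext v
    induction v using hwf.induction with
    | _ v IH =>
      by_cases hv : v = s
      · subst hv; exact h1
      · have hpv : φ.1 (p v hv) = ψ.1 (p v hv) :=
          IH _ (Relation.TransGen.single (hp v hv))
        have h3 := congrFun h2 ⟨v, hv⟩
        exact key _ _ hpv _ _ _ _ h3
  calc Nat.card {φ : V → W // ∀ u v, R u v → A (φ u) (φ v)}
      ≤ Nat.card (W × ({v : V // v ≠ s} → Fin d)) :=
        Nat.card_le_card_of_injective F hinj
    _ = Fintype.card W * d ^ (Fintype.card V - 1) := by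
        rw [Nat.card_eq_fintype_card, Fintype.card_prod, Fintype.card_fun,
          Fintype.card_fin]
        congr 1
        congr 1
        have : Fintype.card {v : V // v ≠ s} = Fintype.card V - 1 := by
          simp [Fintype.card_subtype_compl]
        exact this
end
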